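/- arXiv:1403.5605 — 5 statements merged into one kernel-verified Lean document; each statement's English description precedes it below -/
import Mathlib

section
/- In every execution of the Generalized Lamport's Bakery (GLB) algorithm, if process P_i doorway-precedes process P_j and the two processes request different sessions, then P_j does not enter the critical section before P_i enters the critical section (the FCFS property holds). -/
/-! ## Model of the Generalized Lamport's Bakery (GLB) algorithm -/

/-- Program counter of a process in the GLB algorithm.  The doorway is
`setChoosing s` (Choosing[i]:=true), `setSession s` (Session[i]:=s),
`scan s j m` (computing the max of the other token numbers, `j` is the next index
to inspect and `m` the running maximum), `setToken s m` (Token[i]:=m+1) and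
`unsetChoosing s` (Choosing[i]:=false).  The waiting room consists of the two
busy-wait checks `wait1 s j` and `wait2 s j`, and the exit section of
`exit1` (Token[i]:=0) and `exit2` (Session[i]:=0). -/
inductive GLBPc : Type
  | remainder
  | setChoosing (s : ℕ)
  | setSession (s : ℕ)
  | scan (s : ℕ) (j : ℕ) (m : ℕ)
  | setToken (s : ℕ) (m : ℕ)
  | unsetChoosing (s : ℕ)
  | wait1 (s : ℕ) (j : ℕ)
  | wait2 (s : ℕ) (j : ℕ)
  | cs (s : ℕ)
  | exit1
  | exit2
  deriving DecidableEq

/-- Global state: the shared arrays together with each process's control state. -/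
structure GLBState (N : ℕ) where
  session : Fin N → ℕ
  token : Fin N → ℕ
  choosing : Fin N → Bool
  pc : Fin N → GLBPc

def glbInit (N : ℕ) : GLBState N :=
  { session := fun _ => 0, token := fun _ => 0, choosing := fun _ => false,
    pc := fun _ => GLBPc.remainder }

/-- One atomic step of process `i` of the GLB algorithm, transforming state `st`
into `st'`.  A process at `remainder` may stay put or pick an arbitrary positive
session; a failed busy-wait check is a stuttering step; a process in the CS may
stay or move to the exit section. -/
def glbStep {N : ℕ} (st : GLBState N) (i : Fin N) (st' : GLBState N) : Prop :=
  match st.pc i with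
  | .remainder =>
      st' = st ∨ ∃ s : ℕ, 0 < s ∧
        st' = { st with pc := Function.update st.pc i (.setChoosing s) }
  | .setChoosing s =>
      st' = { st with choosing := Function.update st.choosing i true,
                      pc := Function.update st.pc i (.setSession s) }
  | .setSession s =>
      st' = { st with session := Function.update st.session i s,
                      pc := Function.update st.pc i (.scan s 0 0) }
  | .scan s j m =>
      if h : j < N then
        st' = { st with pc := Function.update st.pc i (.scan s (j+1)
                  (if (⟨j, h⟩ : Fin N) = i then m else max m (st.token ⟨j, h⟩))) }
      else
        st' = { st with pc := Function.update st.pc i (.setToken s m) }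
  | .setToken s m =>
      st' = { st with token := Function.update st.token i (m + 1),
                      pc := Function.update st.pc i (.unsetChoosing s) }
  | .unsetChoosing s =>
      st' = { st with choosing := Function.update st.choosing i false,
                      pc := Function.update st.pc i (.wait1 s 0) }
  | .wait1 s j =>
      if h : j < N then
        if st.choosing ⟨j, h⟩ = false ∨ st.session ⟨j, h⟩ = 0 ∨ st.session ⟨j, h⟩ = s then
          st' = { st with pc := Function.update st.pc i (.wait2 s j) }
        else st' = st
      else
        st' = { st with pc := Function.update st.pc i (.cs s) }
  | .wait2 s j =>
      if h : j < N then
        if (st.token i < st.token ⟨j, h⟩ ∨ (st.token i = st.token ⟨j, h⟩ ∧ i.val < j)) ∨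
            st.token ⟨j, h⟩ = 0 ∨ st.session ⟨j, h⟩ = 0 ∨ st.session ⟨j, h⟩ = s then
          st' = { st with pc := Function.update st.pc i (.wait1 s (j+1)) }
        else st' = st
      else st' = st
  | .cs _ =>
      st' = st ∨ st' = { st with pc := Function.update st.pc i .exit1 }
  | .exit1 =>
      st' = { st with token := Function.update st.token i 0,
                      pc := Function.update st.pc i .exit2 }
  | .exit2 =>
      st' = { st with session := Function.update st.session i 0,
                      pc := Function.update st.pc i .remainder }

/-- An execution of the GLB algorithm: an interleaving of atomic steps
(`sched n` is the process taking the `n`-th step), starting from the initial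
state, in which every process outside its remainder section eventually takes
its next step. -/
structure GLBExec (N : ℕ) where
  state : ℕ → GLBState N
  sched : ℕ → Fin N
  init : state 0 = glbInit N
  step : ∀ n, glbStep (state n) (sched n) (state (n + 1))
  fair : ∀ (i : Fin N) (n : ℕ), (state n).pc i ≠ GLBPc.remainder →
           ∃ m, n ≤ m ∧ sched m = i

/-- Process `i` is in the critical section. -/
def glbInCS {N : ℕ} (st : GLBState N) (i : Fin N) : Prop := ∃ s, st.pc i = GLBPc.cs s

/-- Process `i` is in the entry section (doorway or waiting room). -/
def glbInEntry {N : ℕ} (st : GLBState N) (i : Fin N) : Prop :=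
  match st.pc i with
  | .remainder => False
  | .cs _ => False
  | .exit1 => False
  | .exit2 => False
  | _ => True

/-- At step `n`, process `i` leaves the remainder and enters the doorway,
requesting session `s`. -/
def glbEntersDoorway {N : ℕ} (e : GLBExec N) (i : Fin N) (s : ℕ) (n : ℕ) : Prop :=
  (e.state n).pc i = GLBPc.remainder ∧ (e.state (n+1)).pc i = GLBPc.setChoosing s

/-- At step `n`, process `i` completes its doorway (executes Choosing[i]:=false). -/
def glbCompletesDoorway {N : ℕ} (e : GLBExec N) (i : Fin N) (s : ℕ) (n : ℕ) : Prop :=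
  (e.state n).pc i = GLBPc.unsetChoosing s ∧ (e.state (n+1)).pc i = GLBPc.wait1 s 0

/-- At step `n`, process `i` enters the critical section. -/
def glbEntersCS {N : ℕ} (e : GLBExec N) (i : Fin N) (n : ℕ) : Prop :=
  ¬ glbInCS (e.state n) i ∧ glbInCS (e.state (n+1)) i

/-- Process `i` does not pass through the remainder section during `(a, b]`
(so times `a` and `b` belong to the same invocation of `i`). -/
def glbActiveThrough {N : ℕ} (e : GLBExec N) (i : Fin N) (a b : ℕ) : Prop :=
  ∀ k, a < k → k ≤ b → (e.state k).pc i ≠ GLBPc.remainder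

/-! ### Remote memory references in the cache-coherent (CC) model -/

/-- The shared variables of the GLB algorithm. -/
inductive GLBVar (N : ℕ) : Type
  | session (j : Fin N)
  | token (j : Fin N)
  | choosing (j : Fin N)
  deriving DecidableEq

/-- Shared variables read by the next step of process `i` in state `st`. -/
def glbReads {N : ℕ} (st : GLBState N) (i : Fin N) : Finset (GLBVar N) :=
  match st.pc i with
  | .scan _ j _ => if h : j < N then {GLBVar.token ⟨j, h⟩} else ∅
  | .wait1 _ j => if h : j < N then {GLBVar.choosing ⟨j, h⟩, GLBVar.session ⟨j, h⟩} else ∅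
  | .wait2 _ j => if h : j < N then
      {GLBVar.token i, GLBVar.token ⟨j, h⟩, GLBVar.session ⟨j, h⟩} else ∅
  | _ => ∅

/-- Shared variables written by the next step of process `i` in state `st`. -/
def glbWrites {N : ℕ} (st : GLBState N) (i : Fin N) : Finset (GLBVar N) :=
  match st.pc i with
  | .setChoosing _ => {GLBVar.choosing i}
  | .setSession _ => {GLBVar.session i}
  | .setToken _ _ => {GLBVar.token i}
  | .unsetChoosing _ => {GLBVar.choosing i}
  | .exit1 => {GLBVar.token i}
  | .exit2 => {GLBVar.session i}
  | _ => ∅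

/-- `glbCached e n p v` holds iff just before step `n`, process `p` holds a valid
cached copy of variable `v`: a copy is acquired by reading `v` and stays valid
until some process writes `v`. -/
def glbCached {N : ℕ} (e : GLBExec N) : ℕ → Fin N → GLBVar N → Bool
  | 0, _, _ => false
  | n + 1, p, v =>
      (glbCached e n p v || (decide (e.sched n = p) && decide (v ∈ glbReads (e.state n) p)))
        && ! decide (v ∈ glbWrites (e.state n) (e.sched n))

/-- The number of remote memory references incurred by step `n` of the execution:
every write is an RMR, and a read is an RMR iff the stepping process holds no
valid cached copy. -/
def glbStepRMR {N : ℕ} (e : GLBExec N) (n : ℕ) : ℕ :=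
  (glbWrites (e.state n) (e.sched n)).card +
    ((glbReads (e.state n) (e.sched n)).filter
      (fun v => glbCached e n (e.sched n) v = false)).card

/-!
Once `i` has completed its doorway, `Token[i]` is positive and `Session[i] = si` is positive, and
neither changes while `i` stays in the waiting room.  Suppose `i` is still waiting when `j` enters
the CS.  Then `j`'s whole doorway lies inside `i`'s waiting period, so `j`'s scan reads
`Token[i]` and `j` takes a strictly larger token.  In `j`'s waiting room the second check at
index `i` can then never succeed: `(Token[j], j) > (Token[i], i)`, `Token[i] ≠ 0`, and
`Session[i]` is neither `0` nor `sj`.  So `j` never gets past index `i`.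
-/

section GLB

variable {N : ℕ}

lemma glbStep_frame {st st' : GLBState N} {q i : Fin N} (h : glbStep st q st') (hne : i ≠ q) :
    st'.pc i = st.pc i ∧ st'.session i = st.session i ∧ st'.token i = st.token i := by
  unfold glbStep at h
  split at h <;> (try split_ifs at h) <;> rcases h with rfl | ⟨_, _, rfl⟩ <;> simp [hne]

def glbInv (st : GLBState N) (p : Fin N) : Prop :=
  match st.pc p with
  | .setChoosing s | .setSession s => 0 < s
  | .scan s _ _ | .setToken s _ => 0 < s ∧ st.session p = s
  | .unsetChoosing s | .wait1 s _ | .wait2 s _ | .cs s =>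
      0 < s ∧ st.session p = s ∧ 0 < st.token p
  | _ => True

lemma glbInv_step {st st' : GLBState N} {q : Fin N} (h : glbStep st q st')
    (hinv : ∀ p, glbInv st p) (p : Fin N) : glbInv st' p := by
  by_cases hpq : p = q
  · subst hpq
    have hp := hinv p
    unfold glbStep at h
    unfold glbInv at hp ⊢
    split at h <;> rename_i hpc <;> simp only [hpc] at hp <;> (try split_ifs at h) <;>
      rcases h with rfl | ⟨_, _, rfl⟩ <;> simp_all
  · obtain ⟨hpc, hsession, htoken⟩ := glbStep_frame h hpq
    unfold glbInv
    simp only [hpc, hsession, htoken]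
    exact hinv p

lemma GLBExec.inv (e : GLBExec N) (n : ℕ) (p : Fin N) : glbInv (e.state n) p := by
  induction n generalizing p with
  | zero => rw [e.init]; trivial
  | succ n ih => exact glbInv_step (e.step n) ih p

def glbWaiting (st : GLBState N) (i : Fin N) (s : ℕ) : Prop :=
  ∃ w, st.pc i = .wait1 s w ∨ st.pc i = .wait2 s w

lemma glbWaiting.not_inCS {st : GLBState N} {i : Fin N} {s : ℕ} (h : glbWaiting st i s) :
    ¬ glbInCS st i := by
  rintro ⟨s', hcs⟩
  obtain ⟨w, hw | hw⟩ := h <;> rw [hw] at hcs <;> cases hcs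

lemma glbWaiting.ne_remainder {st : GLBState N} {i : Fin N} {s : ℕ} (h : glbWaiting st i s) :
    st.pc i ≠ .remainder := by
  obtain ⟨w, hw | hw⟩ := h <;> rw [hw] <;> simp

lemma glbWaiting.step {st st' : GLBState N} {q i : Fin N} {s : ℕ} (hw : glbWaiting st i s)
    (h : glbStep st q st') :
    (glbWaiting st' i s ∨ st'.pc i = .cs s) ∧ st'.token i = st.token i := by
  by_cases hqi : q = i
  · subst hqi
    unfold glbStep at h
    obtain ⟨w, hpc | hpc⟩ := hw <;> simp only [hpc] at h <;> split_ifs at h <;> subst h <;>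
      simp [glbWaiting, hpc]
  · obtain ⟨hpc, -, htoken⟩ := glbStep_frame h (Ne.symm hqi)
    exact ⟨Or.inl (by rwa [glbWaiting, hpc]), htoken⟩

lemma glbWaiting_or_entersCS {e : GLBExec N} {i : Fin N} {si d : ℕ}
    (hd : glbCompletesDoorway e i si d) (b : ℕ) :
    (∀ k, d < k → k ≤ b → glbWaiting (e.state k) i si) ∨
      ∃ c, c < b ∧ d < c ∧ glbEntersCS e i c ∧ glbActiveThrough e i d c := by
  induction b with
  | zero => exact Or.inl fun k hk hk0 => by omega
  | succ b ih =>
    rcases ih with hwait | ⟨c, hcb, hdc, hc⟩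
    · rcases Nat.lt_trichotomy b d with hbd | rfl | hdb
      · exact Or.inl fun k hk hkb => by omega
      · refine Or.inl fun k hk hkb => ?_
        obtain rfl : k = b + 1 := by omega
        exact ⟨0, Or.inl hd.2⟩
      · have hwb := hwait b hdb le_rfl
        rcases (hwb.step (e.step b)).1 with hnext | hcs
        · refine Or.inl fun k hk hkb => ?_
          obtain hkb' | rfl := Nat.lt_or_eq_of_le hkb
          · exact hwait k hk (by omega)
          · exact hnext
        · exact Or.inr ⟨b, by omega, hdb, ⟨hwb.not_inCS, si, hcs⟩,
            fun k hk hkb => (hwait k hk hkb).ne_remainder⟩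
    · exact Or.inr ⟨c, by omega, hdc, hc⟩

/-- In the `scan` clause `m` is the running maximum, so once the scan is past index `i` the token
`j` is about to take exceeds `Token[i]`. -/
def glbBehind (st : GLBState N) (i j : Fin N) (sj : ℕ) : Prop :=
  match st.pc j with
  | .setChoosing s | .setSession s => s = sj
  | .scan s w m => s = sj ∧ (i.val < w → st.token i ≤ m)
  | .setToken s m => s = sj ∧ st.token i ≤ m
  | .unsetChoosing s => s = sj ∧ st.token i < st.token j
  | .wait1 s w | .wait2 s w => s = sj ∧ w ≤ i.val ∧ st.token i < st.token j
  | _ => False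

lemma glbBehind.step {st st' : GLBState N} {q i j : Fin N} {si sj : ℕ} (hij : i ≠ j)
    (hs : si ≠ sj) (hinv : glbInv st i) (hwait : glbWaiting st i si)
    (hb : glbBehind st i j sj) (h : glbStep st q st') : glbBehind st' i j sj := by
  by_cases hqj : q = j
  · subst hqj
    obtain ⟨hsi, hsession, htoken⟩ : 0 < si ∧ st.session i = si ∧ 0 < st.token i := by
      obtain ⟨w, hw | hw⟩ := hwait <;> simpa [glbInv, hw] using hinv
    unfold glbStep at h
    unfold glbBehind at hb ⊢
    split at h <;> rename_i hpc <;> simp only [hpc] at hb <;> (try split_ifs at h) <;>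
      rcases h with rfl | ⟨_, _, rfl⟩ <;> grind
  · obtain ⟨hpc, -, htokenj⟩ := glbStep_frame h (Ne.symm hqj)
    have htokeni := (hwait.step h).2
    unfold glbBehind at hb ⊢
    rwa [hpc, htokeni, htokenj]

lemma glbBehind_of_waiting {e : GLBExec N} {i j : Fin N} {si sj d a b : ℕ} (hij : i ≠ j)
    (hs : si ≠ sj) (hwait : ∀ k, d < k → k ≤ b → glbWaiting (e.state k) i si)
    (ha : glbEntersDoorway e j sj a) (hda : d < a) (k : ℕ) (hak : a < k) (hkb : k ≤ b + 1) :
    glbBehind (e.state k) i j sj := by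
  induction k, hak using Nat.le_induction with
  | base => simp [glbBehind, ha.2]
  | succ k hak ih =>
    exact (ih (by omega)).step hij hs (e.inv k i) (hwait k (by omega) (by omega)) (e.step k)

end GLB

theorem glb_fcfs_general {N : ℕ} (e : GLBExec N) (i j : Fin N) (si sj : ℕ)
    (hij : i ≠ j) (hs : si ≠ sj)
    (d : ℕ) (hd : glbCompletesDoorway e i si d)
    (a : ℕ) (ha : glbEntersDoorway e j sj a) (hda : d < a)
    (c2 : ℕ) (hc2 : glbEntersCS e j c2) (hac : a < c2) :
    ∃ c1, c1 ≤ c2 ∧ glbEntersCS e i c1 ∧ d < c1 ∧ glbActiveThrough e i d c1 := by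
  rcases glbWaiting_or_entersCS hd (c2 + 1) with hwait | ⟨c1, hc1, hdc1, hcs, hactive⟩
  · obtain ⟨s, hjcs⟩ := hc2.2
    have hb := glbBehind_of_waiting hij hs (fun k hk hkc => hwait k hk (by omega)) ha hda
      (c2 + 1) (by omega) le_rfl
    simp [glbBehind, hjcs] at hb
  · exact ⟨c1, by omega, hcs, hdc1, hactive⟩

/-- **FCFS for the GLB algorithm.**  If process `i` completes its doorway (at step `d`,
requesting session `si`) before process `j` enters its doorway (at step `a`, requesting a
different session `sj`), then `j` does not enter the critical section before `i` does:
whenever `j` enters the CS at step `c2` of that invocation, `i` has already entered the CS,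
at some step `c1 ≤ c2` of the invocation whose doorway was completed at `d`. -/
theorem glb_fcfs {N : ℕ} (e : GLBExec N) (i j : Fin N) (si sj : ℕ)
    (hij : i ≠ j) (hs : si ≠ sj)
    (d : ℕ) (hd : glbCompletesDoorway e i si d)
    (a : ℕ) (ha : glbEntersDoorway e j sj a) (hda : d < a)
    (c2 : ℕ) (hc2 : glbEntersCS e j c2) (hac : a < c2)
    (hact : glbActiveThrough e j a c2) :
    ∃ c1, c1 ≤ c2 ∧ glbEntersCS e i c1 ∧ d < c1 ∧ glbActiveThrough e i d c1 :=
  glb_fcfs_general e i j si sj hij hs d hd a ha hda c2 hc2 hac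
end

section
/- In every reachable state of every execution of the Generalized Lamport's Bakery (GLB) algorithm, no two processes that request different sessions are in the critical section at the same time (the Mutual Exclusion property holds). -/
/-! Say that `i`, requesting session `s`, is *ahead* of `j` if `Session[j] ∈ {0, s}`, or `j` is
in its doorway and its scan of the tokens has not reached `i` yet or has already read a value
`≥ Token[i]`, or `j`'s ticket `(Token[j], j)` is lexicographically larger than `i`'s. Once `P_i`
has checked `j` in its waiting room, it stays ahead of `j` as long as it keeps its ticket; the
`Choosing` check is what makes this sound, since after it `j` is either outside its doorway (and
will scan `Token[i]` when it next enters) or already holds its final token, which the ticket check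
then compares with `i`'s. Two processes in the CS with different sessions would each be ahead of
the other, so each ticket would be smaller than the other. -/

namespace GLBPc

/-- `Token[i]` is positive and final: `Choosing[i]` has been reset and `Token[i]` not yet. -/
def TokenChosen : GLBPc → Prop
  | wait1 _ _ | wait2 _ _ | cs _ | exit1 => True
  | _ => False

end GLBPc

namespace GLBState

variable {N : ℕ}

def ticket (st : GLBState N) (i : Fin N) : ℕ ×ₗ ℕ := toLex (st.token i, i.val)

def AgreeAt (st st' : GLBState N) (q : Fin N) : Prop :=
  st.session q = st'.session q ∧ st.token q = st'.token q ∧ st.choosing q = st'.choosing q ∧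
    st.pc q = st'.pc q

def LocalInv (st : GLBState N) (i : Fin N) : Prop :=
  match st.pc i with
  | .remainder => st.session i = 0 ∧ st.token i = 0 ∧ st.choosing i = false
  | .setChoosing s => 0 < s ∧ st.session i = 0 ∧ st.token i = 0 ∧ st.choosing i = false
  | .setSession s => 0 < s ∧ st.session i = 0 ∧ st.token i = 0 ∧ st.choosing i = true
  | .scan s _ _ | .setToken s _ =>
      0 < s ∧ st.session i = s ∧ st.token i = 0 ∧ st.choosing i = true
  | .unsetChoosing s => 0 < s ∧ st.session i = s ∧ 0 < st.token i ∧ st.choosing i = true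
  | .wait1 s _ | .wait2 s _ | .cs s =>
      0 < s ∧ st.session i = s ∧ 0 < st.token i ∧ st.choosing i = false
  | .exit1 => 0 < st.token i ∧ st.choosing i = false
  | .exit2 => st.token i = 0 ∧ st.choosing i = false

def Ahead (st : GLBState N) (i : Fin N) (s : ℕ) (j : Fin N) : Prop :=
  st.session j = 0 ∨ st.session j = s ∨
    match st.pc j with
    | .remainder | .setChoosing _ => False
    | .setSession _ | .exit2 => True
    | .scan _ k m => k ≤ i.val ∨ st.token i ≤ m
    | .setToken _ m => st.token i ≤ m
    | .unsetChoosing _ | .wait1 _ _ | .wait2 _ _ | .cs _ | .exit1 => st.ticket i < st.ticket j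

def ChoosingCleared (st : GLBState N) (i : Fin N) (s : ℕ) (j : Fin N) : Prop :=
  st.Ahead i s j ∨ (st.pc j).TokenChosen

def Passed (st : GLBState N) (i j : Fin N) : Prop :=
  match st.pc i with
  | .wait1 s k => j.val < k → st.Ahead i s j
  | .wait2 s k => (j.val < k → st.Ahead i s j) ∧ (j.val = k → st.ChoosingCleared i s j)
  | .cs s => st.Ahead i s j
  | _ => True

def Inv (st : GLBState N) : Prop :=
  (∀ i, st.LocalInv i) ∧ ∀ i j, i ≠ j → st.Passed i j

variable {st st' : GLBState N} {p q i j : Fin N} {s : ℕ}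

theorem agreeAt_of_glbStep (hstep : glbStep st p st') (hq : q ≠ p) : st.AgreeAt st' q := by
  unfold glbStep at hstep
  split at hstep <;> (try split_ifs at hstep) <;> (try obtain rfl | ⟨_, _, rfl⟩ := hstep) <;>
    simp [AgreeAt, hq]

theorem Ahead.of_agreeAt (hj : st.AgreeAt st' j) (hi : st.token i = st'.token i)
    (h : st.Ahead i s j) : st'.Ahead i s j := by
  obtain ⟨h₁, h₂, -, h₄⟩ := hj
  unfold Ahead ticket at *
  rwa [← h₁, ← h₂, ← h₄, ← hi]

theorem ChoosingCleared.of_agreeAt (hj : st.AgreeAt st' j) (hi : st.token i = st'.token i)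
    (h : st.ChoosingCleared i s j) : st'.ChoosingCleared i s j :=
  h.imp (Ahead.of_agreeAt hj hi) (hj.2.2.2 ▸ id)

theorem Ahead.step_by_target (hstep : glbStep st p st') (hi : i ≠ p) (h : st.Ahead i s p) :
    st'.Ahead i s p := by
  unfold Ahead ticket at *
  cases hpc : st.pc p with
  | scan s' k m =>
    simp only [glbStep, hpc] at hstep h
    split_ifs at hstep with hk hkp <;> subst hstep <;> simp only [Function.update_self] at h ⊢
    · have hki : k ≠ i.val := fun hki => hi ((Fin.ext hki.symm : i = ⟨k, hk⟩).trans hkp)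
      omega
    · rcases eq_or_ne k i.val with hki | hki
      · -- the scan reads `Token[i]` itself
        rw [show (⟨k, hk⟩ : Fin N) = i from Fin.ext hki]
        omega
      · omega
    · have := i.isLt
      omega
  | _ =>
    simp only [glbStep, hpc] at hstep h
    all_goals (try split_ifs at hstep) <;> obtain rfl | ⟨_, _, rfl⟩ := hstep <;>
      simp [hi, hpc, Prod.Lex.toLex_lt_toLex] at h ⊢ <;> omega

theorem ChoosingCleared.step_by_target (hstep : glbStep st p st') (hi : i ≠ p)
    (h : st.ChoosingCleared i s p) : st'.ChoosingCleared i s p := by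
  rcases h with h | h
  · exact .inl (h.step_by_target hstep hi)
  · cases hpc : st.pc p <;> simp only [GLBPc.TokenChosen, hpc] at h <;>
      simp only [glbStep, hpc] at hstep <;> (try split_ifs at hstep) <;>
      obtain rfl | rfl := hstep <;> simp [ChoosingCleared, Ahead, GLBPc.TokenChosen, hpc]

theorem Ahead.step_of_ne (hstep : glbStep st p st') (hi : i ≠ p) (h : st.Ahead i s j) :
    st'.Ahead i s j := by
  rcases eq_or_ne j p with rfl | hj
  · exact h.step_by_target hstep hi
  · exact h.of_agreeAt (agreeAt_of_glbStep hstep hj) (agreeAt_of_glbStep hstep hi).2.1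

theorem ChoosingCleared.step_of_ne (hstep : glbStep st p st') (hi : i ≠ p)
    (h : st.ChoosingCleared i s j) : st'.ChoosingCleared i s j := by
  rcases eq_or_ne j p with rfl | hj
  · exact h.step_by_target hstep hi
  · exact h.of_agreeAt (agreeAt_of_glbStep hstep hj) (agreeAt_of_glbStep hstep hi).2.1

theorem Passed.step_of_ne (hstep : glbStep st p st') (hi : i ≠ p) (h : st.Passed i j) :
    st'.Passed i j := by
  unfold Passed at *
  rw [← (agreeAt_of_glbStep hstep hi).2.2.2]
  split at h
  · exact fun hj => (h hj).step_of_ne hstep hi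
  · exact ⟨fun hj => (h.1 hj).step_of_ne hstep hi, fun hj => (h.2 hj).step_of_ne hstep hi⟩
  · exact h.step_of_ne hstep hi
  · trivial

theorem LocalInv.of_agreeAt (hq : st.AgreeAt st' q) (h : st.LocalInv q) : st'.LocalInv q := by
  obtain ⟨h₁, h₂, h₃, h₄⟩ := hq
  unfold LocalInv at *
  rwa [← h₁, ← h₂, ← h₃, ← h₄]

theorem LocalInv.step_by_self (hstep : glbStep st p st') (h : st.LocalInv p) :
    st'.LocalInv p := by
  cases hpc : st.pc p <;> simp only [LocalInv, hpc] at h <;> simp only [glbStep, hpc] at hstep <;>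
    (try split_ifs at hstep) <;> obtain rfl | ⟨_, _, rfl⟩ := hstep <;> simp_all [LocalInv]

theorem LocalInv.step (hstep : glbStep st p st') (h : ∀ q, st.LocalInv q) (q : Fin N) :
    st'.LocalInv q := by
  rcases eq_or_ne q p with rfl | hq
  · exact (h q).step_by_self hstep
  · exact (h q).of_agreeAt (agreeAt_of_glbStep hstep hq)

theorem ChoosingCleared.of_wait1_check (hj : st.LocalInv j)
    (hc : st.choosing j = false ∨ st.session j = 0 ∨ st.session j = s) :
    st.ChoosingCleared i s j := by
  unfold ChoosingCleared Ahead
  cases hpc : st.pc j <;> simp_all [LocalInv, GLBPc.TokenChosen] <;> tauto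

/-- A zero `Token[j]` rules out `TokenChosen`, so the `Choosing` check already gave `Ahead`. -/
theorem Ahead.of_wait2_check (hj : st.LocalInv j) (hcc : st.ChoosingCleared i s j)
    (hc : st.ticket i < st.ticket j ∨ st.token j = 0 ∨ st.session j = 0 ∨ st.session j = s) :
    st.Ahead i s j := by
  unfold ChoosingCleared Ahead ticket at *
  cases hpc : st.pc j <;> simp_all [LocalInv, GLBPc.TokenChosen, Prod.Lex.toLex_lt_toLex] <;> omega

theorem Passed.step_by_self (hinv : st.Inv) (hstep : glbStep st p st') (hj : j ≠ p) :
    st'.Passed p j := by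
  have hp := hinv.2 p j hj.symm
  have hJ := agreeAt_of_glbStep hstep hj
  cases hpc : st.pc p with
  | wait1 s k =>
    simp only [glbStep, hpc] at hstep
    simp only [Passed, hpc] at hp
    split_ifs at hstep with hk hc
    · subst hstep
      simp only [Passed, Function.update_self]
      refine ⟨fun hjk => (hp hjk).of_agreeAt hJ rfl, fun hjk => ?_⟩
      obtain rfl : j = ⟨k, hk⟩ := Fin.ext hjk
      exact (ChoosingCleared.of_wait1_check (hinv.1 _) hc).of_agreeAt hJ rfl
    · subst hstep
      exact hinv.2 p j hj.symm
    · subst hstep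
      simp only [Passed, Function.update_self]
      exact (hp (by omega)).of_agreeAt hJ rfl
  | wait2 s k =>
    simp only [glbStep, hpc] at hstep
    simp only [Passed, hpc] at hp
    split_ifs at hstep with hk hc
    · subst hstep
      simp only [Passed, Function.update_self]
      intro hjk
      rcases Nat.lt_succ_iff_lt_or_eq.mp hjk with hjk | hjk
      · exact (hp.1 hjk).of_agreeAt hJ rfl
      · obtain rfl : j = ⟨k, hk⟩ := Fin.ext hjk
        refine (Ahead.of_wait2_check (hinv.1 _) (hp.2 rfl) ?_).of_agreeAt hJ rfl
        simpa only [ticket, Prod.Lex.toLex_lt_toLex] using hc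
    all_goals subst hstep; exact hinv.2 p j hj.symm
  | _ =>
    simp only [glbStep, hpc] at hstep
    all_goals (try split_ifs at hstep) <;> obtain rfl | ⟨_, _, rfl⟩ := hstep <;>
      first | exact hp | simp [Passed]

theorem inv_glbInit : (glbInit N).Inv :=
  ⟨fun _ => by simp [LocalInv, glbInit], fun _ _ _ => by simp [Passed, glbInit]⟩

theorem Inv.step (h : st.Inv) (hstep : glbStep st p st') : st'.Inv := by
  refine ⟨LocalInv.step hstep h.1, fun i j hij => ?_⟩
  rcases eq_or_ne i p with rfl | hi
  · exact Passed.step_by_self h hstep hij.symm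
  · exact (h.2 i j hij).step_of_ne hstep hi

theorem Inv.ticket_lt_of_cs {si sj : ℕ} (h : st.Inv) (hi : st.pc i = .cs si)
    (hj : st.pc j = .cs sj) (hs : si ≠ sj) (hij : i ≠ j) : st.ticket i < st.ticket j := by
  have hahead := h.2 i j hij
  have hloc := h.1 j
  simp only [Passed, Ahead, hi, hj] at hahead
  simp only [LocalInv, hj] at hloc
  obtain ⟨hpos, hsession, -, -⟩ := hloc
  rcases hahead with h0 | h0 | hlt
  · omega
  · exact absurd (hsession.symm.trans h0) hs.symm
  · exact hlt

end GLBState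

theorem GLBExec.inv_state {N : ℕ} (e : GLBExec N) (n : ℕ) : (e.state n).Inv := by
  induction n with
  | zero => exact e.init ▸ GLBState.inv_glbInit
  | succ n ih => exact ih.step (e.step n)

/-- **Mutual exclusion for the GLB algorithm.**  In every reachable state of every
execution, no two processes requesting different sessions are simultaneously in the
critical section. -/
theorem glb_mutual_exclusion {N : ℕ} (e : GLBExec N) (n : ℕ) (i j : Fin N) (si sj : ℕ)
    (hi : (e.state n).pc i = GLBPc.cs si) (hj : (e.state n).pc j = GLBPc.cs sj)
    (hs : si ≠ sj) : False := by
  have hinv := e.inv_state n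
  have hij : i ≠ j := by
    rintro rfl
    exact hs (GLBPc.cs.inj (hi.symm.trans hj))
  exact lt_asymm (hinv.ticket_lt_of_cs hi hj hs hij) (hinv.ticket_lt_of_cs hj hi hs.symm hij.symm)
end

section
/- The Generalized Lamport's Bakery (GLB) algorithm satisfies the Concurrent Entry property: in any execution, if a process P_i is in the entry section and throughout that period every other process P_j satisfies Session[j] ∈ {0, mysession of P_i} (i.e., there is no conflicting process), then P_i enters the critical section within a bounded number of its own steps. -/
/-!
While `P_i` is in its entry section and no process holds a conflicting session, every
busy-wait test of `P_i` succeeds at its first attempt, since each `Session[j]` is `0` or `s`.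
So `P_i` never stutters: each of its own steps strictly decreases the number of steps left
in its doorway and waiting room (`3N + 6` at the start of the doorway), and steps of the
other processes do not touch `P_i`'s program counter or `Session[i]`.
-/

/-- The number of own steps a process at this program counter needs to reach the CS when
none of its busy-wait tests fails. -/
def GLBPc.stepsToCS (N : ℕ) : GLBPc → ℕ
  | .setChoosing _ => 3 * N + 6
  | .setSession _ => 3 * N + 5
  | .scan _ j _ => 3 * N + 4 - j
  | .setToken _ _ => 2 * N + 3
  | .unsetChoosing _ => 2 * N + 2
  | .wait1 _ j => 2 * (N - j) + 1
  | .wait2 _ j => 2 * (N - j)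
  | _ => 0

/-- `Session[i] = s` is what lets `P_i` pass its own busy-wait tests (at `j = i`); the index
bounds make each of its steps decrease `GLBPc.stepsToCS`. -/
def glbRequesting {N : ℕ} (st : GLBState N) (i : Fin N) (s : ℕ) : Prop :=
  match st.pc i with
  | .setChoosing s' | .setSession s' => s' = s
  | .scan s' j _ => s' = s ∧ j ≤ N ∧ st.session i = s
  | .setToken s' _ | .unsetChoosing s' | .wait1 s' _ => s' = s ∧ st.session i = s
  | .wait2 s' j => s' = s ∧ j < N ∧ st.session i = s
  | _ => False

section Step

variable {N : ℕ} {st st' : GLBState N} {i : Fin N} {s : ℕ}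

theorem glbRequesting.inEntry (h : glbRequesting st i s) : glbInEntry st i := by
  unfold glbRequesting at h
  unfold glbInEntry
  split at h <;> simp_all

theorem glbRequesting_congr (hpc : st'.pc i = st.pc i) (hsession : st'.session i = st.session i) :
    glbRequesting st' i s ↔ glbRequesting st i s := by
  unfold glbRequesting
  rw [hpc, hsession]

theorem glbStep_pc_session_of_ne {p : Fin N} (h : glbStep st p st') (hi : i ≠ p) :
    st'.pc i = st.pc i ∧ st'.session i = st.session i := by
  unfold glbStep at h
  split at h <;> (repeat' split at h) <;> (try obtain rfl | ⟨_, _, rfl⟩ := h) <;>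
    simp [Function.update_of_ne hi]

theorem glbStep_requesting (hreq : glbRequesting st i s)
    (hfree : ∀ j, j ≠ i → st.session j = 0 ∨ st.session j = s) (h : glbStep st i st') :
    glbInCS st' i ∨
      (glbRequesting st' i s ∧ (st'.pc i).stepsToCS N < (st.pc i).stepsToCS N) := by
  have hcompatible (hi : st.session i = s) (j : Fin N) : st.session j = 0 ∨ st.session j = s :=
    (eq_or_ne j i).elim (fun hj => .inr (hj ▸ hi)) (hfree j)
  unfold glbStep at h
  rcases hpc : st.pc i <;> simp only [glbRequesting, hpc] at hreq h <;> (repeat' split at h) <;>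
    (try subst h) <;> simp_all [glbInCS, glbRequesting, GLBPc.stepsToCS]
  all_goals omega

end Step

namespace GLBExec

variable {N : ℕ} (e : GLBExec N) (i : Fin N)

def ownSteps (a b : ℕ) : ℕ :=
  ((Finset.Ico a b).filter (fun k => e.sched k = i)).card

theorem ownSteps_succ_right {a b : ℕ} (hab : a ≤ b) :
    e.ownSteps i a (b + 1) = e.ownSteps i a b + if e.sched b = i then 1 else 0 := by
  simp only [ownSteps, Finset.card_filter]
  exact Finset.sum_Ico_succ_top hab _

theorem ownSteps_le_succ_left (a b : ℕ) : e.ownSteps i a b ≤ e.ownSteps i (a + 1) b + 1 := by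
  have h := Finset.pred_card_le_card_erase (s := (Finset.Ico a b).filter (e.sched · = i)) (a := a)
  rw [← Finset.filter_erase, ← Nat.Ico_succ_left_eq_erase_Ico] at h
  exact Nat.le_add_of_sub_le h

theorem inCS_or_requesting {s a : ℕ} (hreq : glbRequesting (e.state a) i s)
    (hfree : ∀ k, a ≤ k → glbInEntry (e.state k) i →
      ∀ j, j ≠ i → (e.state k).session j = 0 ∨ (e.state k).session j = s)
    {b : ℕ} (hab : a ≤ b) :
    (∃ c, a ≤ c ∧ c ≤ b ∧ glbInCS (e.state c) i) ∨
      (glbRequesting (e.state b) i s ∧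
        ((e.state b).pc i).stepsToCS N + e.ownSteps i a b ≤ ((e.state a).pc i).stepsToCS N) := by
  induction b, hab using Nat.le_induction with
  | base => simp [hreq, ownSteps]
  | succ b hab ih =>
    obtain ⟨c, hac, hcb, hc⟩ | ⟨hreqb, hbound⟩ := ih
    · exact .inl ⟨c, hac, by omega, hc⟩
    rw [e.ownSteps_succ_right i hab]
    by_cases hsched : e.sched b = i
    · have hstep := e.step b
      rw [hsched] at hstep
      obtain hcs | ⟨hreq', hlt⟩ :=
        glbStep_requesting hreqb (hfree b hab hreqb.inEntry) hstep
      · exact .inl ⟨b + 1, by omega, le_rfl, hcs⟩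
      · rw [if_pos hsched]
        exact .inr ⟨hreq', by omega⟩
    · obtain ⟨hpc, hsession⟩ := glbStep_pc_session_of_ne (e.step b) (Ne.symm hsched)
      rw [if_neg hsched, hpc]
      exact .inr ⟨(glbRequesting_congr hpc hsession).2 hreqb, by omega⟩

end GLBExec

/-- **Concurrent entry for the GLB algorithm.**  There is a bound `B` (depending only on
`N`) such that in every execution, if process `i` enters the entry section requesting
session `s` and, throughout the period it is in the entry section, every other process `j`
has `Session[j] ∈ {0, s}` (no conflicting process), then `i` enters the critical section
within `B` of its own steps. -/
theorem glb_concurrent_entry (N : ℕ) :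
    ∃ B : ℕ, ∀ (e : GLBExec N) (i : Fin N) (s : ℕ) (n : ℕ),
      glbEntersDoorway e i s n →
      (∀ m, n < m → glbInEntry (e.state m) i →
        ∀ j, j ≠ i → (e.state m).session j = 0 ∨ (e.state m).session j = s) →
      ∀ m, n ≤ m →
        B ≤ ((Finset.Ico n m).filter (fun k => e.sched k = i)).card →
        ∃ c, n ≤ c ∧ c ≤ m ∧ glbInCS (e.state c) i := by
  refine ⟨3 * N + 8, fun e i s n hdoor hfree m hnm hsteps => ?_⟩
  have hreq : glbRequesting (e.state (n + 1)) i s := by simp [glbRequesting, hdoor.2]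
  obtain rfl | hm := hnm.eq_or_lt
  · simp at hsteps
  obtain ⟨c, hc, hcm, hcs⟩ | ⟨-, hbound⟩ := e.inCS_or_requesting i hreq hfree hm
  · exact ⟨c, by omega, hcm, hcs⟩
  · have := e.ownSteps_le_succ_left i n m
    simp only [hdoor.2, GLBPc.stepsToCS, GLBExec.ownSteps] at hbound this
    omega
end

section
/- In every execution of the BWBGME algorithm, if a process P flips GlobalColor at the time point t_i ending the interval I_i, then when P was computing its token number there existed a conflicting process Q with the same token color as P and a strictly smaller token number; moreover, both P and Q performed their read of GlobalColor (line 5) during the interval I_i. -/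
/-! ## Model of the Black and White Bakery GME (BWBGME) algorithm -/

inductive Color : Type
  | black
  | white
  deriving DecidableEq

/-- The opposite color. -/
def Color.opp : Color → Color
  | .black => .white
  | .white => .black

/-- A token: a session number, a color in {black, white, ⊥} (`none` is ⊥) and a
token number. -/
structure BWTok where
  session : ℕ
  color : Option Color
  number : ℕ
  deriving DecidableEq

def BWTok.init : BWTok := ⟨0, none, 0⟩

/-- Program counter of a process in the BWBGME algorithm.  The doorway is
`d1 s` (Token[i]:=(s,⊥,0)), `d2 s` (Choosing[i]:=true, line 4),
`d3 s` (mycolor:=GlobalColor, line 5), `scan s c j m` (the loop computing the max `m`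
of the token numbers of conflicting processes with token color `c`; `j` is the next
index to read), `d4 s c m` (Token[i]:=(s,c,m), where `m` is the final mynumber) and
`d5 s c m` (Choosing[i]:=false).  The waiting room iterates, for each `j`:
`w1` (wait until Choosing[j]=false or Token[j].session=s), `wB` (the branch reading
Token[j].color), and the busy-waits `wSame` / `wDiff`.  The exit section is the scan
`x1 s c m j` looking for an active process of the opposite color (entered only when
`m ≠ 1`), `xFlip s c m` (GlobalColor := opposite of `c`) and `x2` (Token[i]:=(0,⊥,0)). -/
inductive BWPc : Type
  | remainder
  | d1 (s : ℕ)
  | d2 (s : ℕ)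
  | d3 (s : ℕ)
  | scan (s : ℕ) (c : Color) (j : ℕ) (m : ℕ)
  | d4 (s : ℕ) (c : Color) (m : ℕ)
  | d5 (s : ℕ) (c : Color) (m : ℕ)
  | w1 (s : ℕ) (c : Color) (m : ℕ) (j : ℕ)
  | wB (s : ℕ) (c : Color) (m : ℕ) (j : ℕ)
  | wSame (s : ℕ) (c : Color) (m : ℕ) (j : ℕ)
  | wDiff (s : ℕ) (c : Color) (m : ℕ) (j : ℕ)
  | cs (s : ℕ) (c : Color) (m : ℕ)
  | x1 (s : ℕ) (c : Color) (m : ℕ) (j : ℕ)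
  | xFlip (s : ℕ) (c : Color) (m : ℕ)
  | x2
  deriving DecidableEq

/-- Global state: GlobalColor, the shared arrays Token and Choosing, and the
control state of each process. -/
structure BWState (N : ℕ) where
  gcolor : Color
  token : Fin N → BWTok
  choosing : Fin N → Bool
  pc : Fin N → BWPc

/-- Initial state; GlobalColor is initialized arbitrarily to `c0`. -/
def bwInit (N : ℕ) (c0 : Color) : BWState N :=
  { gcolor := c0, token := fun _ => BWTok.init, choosing := fun _ => false,
    pc := fun _ => BWPc.remainder }

/-- One atomic step of process `i` of the BWBGME algorithm. -/
def bwStep {N : ℕ} (st : BWState N) (i : Fin N) (st' : BWState N) : Prop :=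
  match st.pc i with
  | .remainder =>
      st' = st ∨ ∃ s : ℕ, 0 < s ∧ st' = { st with pc := Function.update st.pc i (.d1 s) }
  | .d1 s =>
      st' = { st with token := Function.update st.token i ⟨s, none, 0⟩,
                      pc := Function.update st.pc i (.d2 s) }
  | .d2 s =>
      st' = { st with choosing := Function.update st.choosing i true,
                      pc := Function.update st.pc i (.d3 s) }
  | .d3 s =>
      st' = { st with pc := Function.update st.pc i (.scan s st.gcolor 0 0) }
  | .scan s c j m =>
      if h : j < N then
        st' = { st with pc := Function.update st.pc i (.scan s c (j+1)
                  (if (st.token ⟨j, h⟩).color = some c ∧ (st.token ⟨j, h⟩).session ≠ 0 ∧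
                      (st.token ⟨j, h⟩).session ≠ s
                   then max m (st.token ⟨j, h⟩).number else m)) }
      else
        st' = { st with pc := Function.update st.pc i (.d4 s c (m+1)) }
  | .d4 s c m =>
      st' = { st with token := Function.update st.token i ⟨s, some c, m⟩,
                      pc := Function.update st.pc i (.d5 s c m) }
  | .d5 s c m =>
      st' = { st with choosing := Function.update st.choosing i false,
                      pc := Function.update st.pc i (.w1 s c m 0) }
  | .w1 s c m j =>
      if h : j < N then
        if st.choosing ⟨j, h⟩ = false ∨ (st.token ⟨j, h⟩).session = s then
          st' = { st with pc := Function.update st.pc i (.wB s c m j) }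
        else st' = st
      else
        st' = { st with pc := Function.update st.pc i (.cs s c m) }
  | .wB s c m j =>
      if h : j < N then
        if (st.token ⟨j, h⟩).color = some c then
          st' = { st with pc := Function.update st.pc i (.wSame s c m j) }
        else
          st' = { st with pc := Function.update st.pc i (.wDiff s c m j) }
      else st' = st
  | .wSame s c m j =>
      if h : j < N then
        if (m < (st.token ⟨j, h⟩).number ∨ (m = (st.token ⟨j, h⟩).number ∧ i.val < j)) ∨
            (st.token ⟨j, h⟩).color ≠ some c ∨ (st.token ⟨j, h⟩).session = 0 ∨
            (st.token ⟨j, h⟩).session = s then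
          st' = { st with pc := Function.update st.pc i (.w1 s c m (j+1)) }
        else st' = st
      else st' = st
  | .wDiff s c m j =>
      if h : j < N then
        if st.gcolor ≠ c ∨ (st.token ⟨j, h⟩).color = some c ∨
            (st.token ⟨j, h⟩).session = 0 ∨ (st.token ⟨j, h⟩).session = s then
          st' = { st with pc := Function.update st.pc i (.w1 s c m (j+1)) }
        else st' = st
      else st' = st
  | .cs s c m =>
      st' = st ∨
        st' = { st with pc :=
                  Function.update st.pc i (if m = 1 then BWPc.x2 else BWPc.x1 s c m 0) }
  | .x1 s c m j =>
      if h : j < N then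
        if (st.token ⟨j, h⟩).session ≠ 0 ∧ (st.token ⟨j, h⟩).color = some c.opp then
          st' = { st with pc := Function.update st.pc i .x2 }
        else
          st' = { st with pc := Function.update st.pc i (.x1 s c m (j+1)) }
      else
        st' = { st with pc := Function.update st.pc i (.xFlip s c m) }
  | .xFlip _ c _ =>
      st' = { st with gcolor := c.opp, pc := Function.update st.pc i .x2 }
  | .x2 =>
      st' = { st with token := Function.update st.token i BWTok.init,
                      pc := Function.update st.pc i .remainder }

/-- An execution of the BWBGME algorithm: an interleaving of atomic steps from an
initial state (with arbitrary GlobalColor) in which every process outside its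
remainder section eventually takes its next step. -/
structure BWExec (N : ℕ) where
  state : ℕ → BWState N
  sched : ℕ → Fin N
  init : ∃ c0, state 0 = bwInit N c0
  step : ∀ n, bwStep (state n) (sched n) (state (n + 1))
  fair : ∀ (i : Fin N) (n : ℕ), (state n).pc i ≠ BWPc.remainder →
           ∃ m, n ≤ m ∧ sched m = i

/-- Process `i` is in the critical section. -/
def bwInCS {N : ℕ} (st : BWState N) (i : Fin N) : Prop :=
  ∃ s c m, st.pc i = BWPc.cs s c m

/-- Process `i` is in the entry section (doorway or waiting room). -/
def bwInEntry {N : ℕ} (st : BWState N) (i : Fin N) : Prop :=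
  match st.pc i with
  | .remainder => False
  | .cs _ _ _ => False
  | .x1 _ _ _ _ => False
  | .xFlip _ _ _ => False
  | .x2 => False
  | _ => True

/-- At step `n`, process `i` leaves the remainder and enters the doorway,
requesting session `s`. -/
def bwEntersDoorway {N : ℕ} (e : BWExec N) (i : Fin N) (s : ℕ) (n : ℕ) : Prop :=
  (e.state n).pc i = BWPc.remainder ∧ (e.state (n+1)).pc i = BWPc.d1 s

/-- At step `n`, process `i` completes its doorway (executes Choosing[i]:=false),
having requested session `s` and chosen token color `c` and token number `m`. -/
def bwCompletesDoorway {N : ℕ} (e : BWExec N) (i : Fin N) (s : ℕ) (c : Color) (m : ℕ)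
    (n : ℕ) : Prop :=
  (e.state n).pc i = BWPc.d5 s c m ∧ (e.state (n+1)).pc i = BWPc.w1 s c m 0

/-- At step `n`, process `i` executes line 5, reading GlobalColor = `c`
(its invocation requests session `s`). -/
def bwLine5 {N : ℕ} (e : BWExec N) (i : Fin N) (s : ℕ) (c : Color) (n : ℕ) : Prop :=
  (e.state n).pc i = BWPc.d3 s ∧ (e.state (n+1)).pc i = BWPc.scan s c 0 0

/-- At step `n`, process `i` executes line 4 (Choosing[i]:=true). -/
def bwLine4 {N : ℕ} (e : BWExec N) (i : Fin N) (s : ℕ) (n : ℕ) : Prop :=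
  (e.state n).pc i = BWPc.d2 s ∧ (e.state (n+1)).pc i = BWPc.d3 s

/-- At step `n`, process `i` enters the critical section. -/
def bwEntersCS {N : ℕ} (e : BWExec N) (i : Fin N) (n : ℕ) : Prop :=
  ¬ bwInCS (e.state n) i ∧ bwInCS (e.state (n+1)) i

/-- At step `n`, process `i` finishes (leaves) the critical section. -/
def bwLeavesCS {N : ℕ} (e : BWExec N) (i : Fin N) (n : ℕ) : Prop :=
  bwInCS (e.state n) i ∧ ¬ bwInCS (e.state (n+1)) i

/-- At step `n`, process `i` completes its exit section
(executes Token[i]:=(0,⊥,0) and returns to the remainder section). -/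
def bwCompletesExit {N : ℕ} (e : BWExec N) (i : Fin N) (n : ℕ) : Prop :=
  (e.state n).pc i = BWPc.x2 ∧ (e.state (n+1)).pc i = BWPc.remainder

/-- Process `i` does not pass through the remainder section during `(a, b]`
(so times `a` and `b` belong to the same invocation of `i`). -/
def bwActiveThrough {N : ℕ} (e : BWExec N) (i : Fin N) (a b : ℕ) : Prop :=
  ∀ k, a < k → k ≤ b → (e.state k).pc i ≠ BWPc.remainder

/-- GlobalColor is flipped at step `n`: the step is a write that changes its value. -/
def bwFlipAt {N : ℕ} (e : BWExec N) (n : ℕ) : Prop :=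
  (e.state (n+1)).gcolor ≠ (e.state n).gcolor


/-!
The core is an induction over the flips of GlobalColor (`BWExec.noStaleReader`): if the flip at
step `k` writes the color `d.opp`, no invocation that read `d.opp` at line 5 before `k` is still
under way at `k`. Let `R` be the flipper and `Q` such a reader. By induction GlobalColor stayed
`d` since `R` read it, so `Q` read before `R`. The exit scan of `R` found no token of color
`d.opp`, so `Q` was still in its doorway then, and also when `R` checked `Choosing[Q]`: `Q` and `R`
request the same session. Since `R` flips, its number is at least 2 and was copied from a
`d`-colored donor of another session with a smaller number, which must have left before `R`
passed its waiting room. The donor checked `Choosing[Q]` too: after the line-5 read of `Q` this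
would give it the session of `Q`; before it, the donor, which read `d`, would have been under way
across a flip to `d`, contradicting the induction hypothesis.

For the theorem, the flip at `t` writes the opposite of the color `c` of `p`, since two
simultaneous flippers have the same color; the induction then shows that GlobalColor stayed `c`
since the line-5 reads of `p` and of its donor `q`.
-/

theorem exists_last_entry {f : ℕ → Prop} {a t : ℕ} (hat : a ≤ t) (ha : ¬ f a) (ht : f t) :
    ∃ x, a ≤ x ∧ x < t ∧ ¬ f x ∧ ∀ n, x < n → n ≤ t → f n := by
  induction t, hat using Nat.le_induction with
  | base => exact absurd ht ha
  | succ t hat ih =>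
    by_cases hft : f t
    · obtain ⟨x, hax, hxt, hfx, hx⟩ := ih hft
      refine ⟨x, hax, by omega, hfx, fun n hxn hnt => ?_⟩
      rcases Nat.lt_or_ge n (t + 1) with hn | hn
      · exact hx n hxn (by omega)
      · rwa [show n = t + 1 by omega]
    · exact ⟨t, hat, by omega, hft, fun n hxn hnt => by rwa [show n = t + 1 by omega]⟩

theorem exists_first_exit {f : ℕ → Prop} {a b : ℕ} (hab : a ≤ b) (ha : f a) (hb : ¬ f b) :
    ∃ x, a ≤ x ∧ x < b ∧ f x ∧ ¬ f (x + 1) := by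
  induction b, hab using Nat.le_induction with
  | base => exact absurd ha hb
  | succ b hab ih =>
    by_cases hfb : f b
    · exact ⟨b, hab, by omega, hfb, hb⟩
    · obtain ⟨x, hax, hxb, hx, hfx⟩ := ih hfb
      exact ⟨x, hax, by omega, hx, hfx⟩

namespace Color

theorem opp_opp (c : Color) : c.opp.opp = c := by cases c <;> rfl

theorem opp_ne (c : Color) : c.opp ≠ c := by cases c <;> simp [opp]

theorem eq_of_ne_opp {a b : Color} (h : a ≠ b.opp) : a = b := by
  cases a <;> cases b <;> simp_all [opp]

theorem eq_opp_of_ne {a b : Color} (h : a ≠ b) : a = b.opp := by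
  cases a <;> cases b <;> simp_all [opp]

end Color

section

variable {N : ℕ}

/-- The condition of the first busy-wait of the waiting room, for process `q`. -/
def BWState.ChoosingOk (st : BWState N) (s : ℕ) (q : Fin N) : Prop :=
  st.choosing q = false ∨ (st.token q).session = s

/-- The condition of the busy-wait on a process `q` whose token has the waiter's color. -/
def BWState.NumberOk (st : BWState N) (i : Fin N) (s : ℕ) (c : Color) (m : ℕ) (q : Fin N) :
    Prop :=
  (m < (st.token q).number ∨ (m = (st.token q).number ∧ i.val < q.val)) ∨
    (st.token q).color ≠ some c ∨ (st.token q).session = 0 ∨ (st.token q).session = s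

/-- The exit scan of a `c`-colored process finds no active token of the opposite color at `q`. -/
def BWState.ExitOk (st : BWState N) (c : Color) (q : Fin N) : Prop :=
  ¬ ((st.token q).session ≠ 0 ∧ (st.token q).color = some c.opp)

/-- `bwStep` as seen by the program counter of the stepping process `i`. -/
inductive PcMove (st : BWState N) (i : Fin N) : BWPc → BWPc → Prop
  | enter {s : ℕ} : 0 < s → PcMove st i .remainder (.d1 s)
  | d1 {s : ℕ} : PcMove st i (.d1 s) (.d2 s)
  | d2 {s : ℕ} : PcMove st i (.d2 s) (.d3 s)
  | line5 {s : ℕ} : PcMove st i (.d3 s) (.scan s st.gcolor 0 0)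
  | scan {s : ℕ} {c : Color} {j m : ℕ} (h : j < N) :
      PcMove st i (.scan s c j m) (.scan s c (j+1)
        (if (st.token ⟨j, h⟩).color = some c ∧ (st.token ⟨j, h⟩).session ≠ 0 ∧
            (st.token ⟨j, h⟩).session ≠ s
         then max m (st.token ⟨j, h⟩).number else m))
  | scanDone {s : ℕ} {c : Color} {j m : ℕ} : ¬ j < N → PcMove st i (.scan s c j m) (.d4 s c (m+1))
  | d4 {s : ℕ} {c : Color} {m : ℕ} : PcMove st i (.d4 s c m) (.d5 s c m)
  | d5 {s : ℕ} {c : Color} {m : ℕ} : PcMove st i (.d5 s c m) (.w1 s c m 0)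
  | w1 {s : ℕ} {c : Color} {m j : ℕ} (h : j < N) :
      st.ChoosingOk s ⟨j, h⟩ → PcMove st i (.w1 s c m j) (.wB s c m j)
  | w1Done {s : ℕ} {c : Color} {m j : ℕ} : ¬ j < N → PcMove st i (.w1 s c m j) (.cs s c m)
  | wBSame {s : ℕ} {c : Color} {m j : ℕ} (h : j < N) :
      (st.token ⟨j, h⟩).color = some c → PcMove st i (.wB s c m j) (.wSame s c m j)
  | wBDiff {s : ℕ} {c : Color} {m j : ℕ} (h : j < N) :
      (st.token ⟨j, h⟩).color ≠ some c → PcMove st i (.wB s c m j) (.wDiff s c m j)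
  | wSame {s : ℕ} {c : Color} {m j : ℕ} (h : j < N) :
      st.NumberOk i s c m ⟨j, h⟩ → PcMove st i (.wSame s c m j) (.w1 s c m (j+1))
  | wDiff {s : ℕ} {c : Color} {m j : ℕ} (h : j < N) :
      st.gcolor ≠ c ∨ (st.token ⟨j, h⟩).color = some c ∨
        (st.token ⟨j, h⟩).session = 0 ∨ (st.token ⟨j, h⟩).session = s →
      PcMove st i (.wDiff s c m j) (.w1 s c m (j+1))
  | exitShort {s : ℕ} {c : Color} : PcMove st i (.cs s c 1) .x2
  | exitScan {s : ℕ} {c : Color} {m : ℕ} : m ≠ 1 → PcMove st i (.cs s c m) (.x1 s c m 0)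
  | x1Found {s : ℕ} {c : Color} {m j : ℕ} (h : j < N) :
      (st.token ⟨j, h⟩).session ≠ 0 ∧ (st.token ⟨j, h⟩).color = some c.opp →
      PcMove st i (.x1 s c m j) .x2
  | x1Next {s : ℕ} {c : Color} {m j : ℕ} (h : j < N) :
      st.ExitOk c ⟨j, h⟩ → PcMove st i (.x1 s c m j) (.x1 s c m (j+1))
  | x1Done {s : ℕ} {c : Color} {m j : ℕ} : ¬ j < N → PcMove st i (.x1 s c m j) (.xFlip s c m)
  | flip {s : ℕ} {c : Color} {m : ℕ} : PcMove st i (.xFlip s c m) .x2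
  | x2 : PcMove st i .x2 .remainder

namespace bwStep

variable {st st' : BWState N} {i : Fin N}

theorem pc_move (h : bwStep st i st') : st'.pc i = st.pc i ∨ PcMove st i (st.pc i) (st'.pc i) := by
  unfold bwStep at h
  split at h <;> rename_i hpc <;> rw [hpc]
  case h_1 =>
    rcases h with rfl | ⟨s, hs, rfl⟩
    · exact .inl hpc
    · exact .inr (by simpa using PcMove.enter hs)
  case h_5 hj =>
    split at h
    · subst h; exact .inr (by simp only [Function.update_self]; exact .scan _)
    · subst h; exact .inr (by simp only [Function.update_self]; exact .scanDone ‹_›)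
  case h_12 m =>
    rcases h with rfl | rfl
    · exact .inl hpc
    · by_cases hm : m = 1 <;> simp only [hm, Function.update_self, if_true, if_false]
      · subst hm; exact .inr .exitShort
      · exact .inr (.exitScan hm)
  all_goals
    repeat' split at h
    all_goals first
      | (subst h; exact .inl (by simpa using hpc))
      | (subst h; right; simp only [Function.update_self]; constructor <;> assumption)

theorem frame (h : bwStep st i st') {j : Fin N} (hj : j ≠ i) :
    st'.pc j = st.pc j ∧ st'.token j = st.token j ∧ st'.choosing j = st.choosing j := by
  unfold bwStep at h
  split at h
  case h_1 => obtain rfl | ⟨s, -, rfl⟩ := h <;> simp [Function.update_of_ne hj]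
  case h_12 => obtain rfl | rfl := h <;> simp [Function.update_of_ne hj]
  all_goals (repeat' split at h) <;> subst h <;> simp [Function.update_of_ne hj]

theorem gcolor_eq_or (h : bwStep st i st') :
    st'.gcolor = st.gcolor ∨ ∃ s c m, st.pc i = .xFlip s c m ∧ st'.gcolor = c.opp := by
  unfold bwStep at h
  split at h
  case h_1 => obtain rfl | ⟨s, -, rfl⟩ := h <;> simp
  case h_12 => obtain rfl | rfl := h <;> simp
  all_goals (repeat' split at h) <;> subst h <;> simp_all

theorem token_eq_or (h : bwStep st i st') :
    st'.token i = st.token i ∨ (∃ s, st.pc i = .d1 s ∧ st'.token i = ⟨s, none, 0⟩) ∨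
      (∃ s c m, st.pc i = .d4 s c m ∧ st'.token i = ⟨s, some c, m⟩) ∨
      (st.pc i = .x2 ∧ st'.token i = BWTok.init) := by
  unfold bwStep at h
  split at h
  case h_1 => obtain rfl | ⟨s, -, rfl⟩ := h <;> simp
  case h_12 => obtain rfl | rfl := h <;> simp
  all_goals (repeat' split at h) <;> subst h <;> simp_all

end bwStep

def pcInv : BWPc → BWTok → Bool → Prop
  | .remainder, tk, ch => tk = BWTok.init ∧ ch = false
  | .d1 s, tk, ch => 0 < s ∧ tk = BWTok.init ∧ ch = false
  | .d2 s, tk, ch => 0 < s ∧ tk = ⟨s, none, 0⟩ ∧ ch = false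
  | .d3 s, tk, ch => 0 < s ∧ tk = ⟨s, none, 0⟩ ∧ ch = true
  | .scan s _ _ _, tk, ch => 0 < s ∧ tk = ⟨s, none, 0⟩ ∧ ch = true
  | .d4 s _ m, tk, ch => 0 < s ∧ tk = ⟨s, none, 0⟩ ∧ ch = true ∧ 1 ≤ m
  | .d5 s c m, tk, ch => 0 < s ∧ tk = ⟨s, some c, m⟩ ∧ ch = true ∧ 1 ≤ m
  | .w1 s c m _, tk, ch => 0 < s ∧ tk = ⟨s, some c, m⟩ ∧ ch = false ∧ 1 ≤ m
  | .wB s c m _, tk, ch => 0 < s ∧ tk = ⟨s, some c, m⟩ ∧ ch = false ∧ 1 ≤ m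
  | .wSame s c m _, tk, ch => 0 < s ∧ tk = ⟨s, some c, m⟩ ∧ ch = false ∧ 1 ≤ m
  | .wDiff s c m _, tk, ch => 0 < s ∧ tk = ⟨s, some c, m⟩ ∧ ch = false ∧ 1 ≤ m
  | .cs s c m, tk, ch => 0 < s ∧ tk = ⟨s, some c, m⟩ ∧ ch = false ∧ 1 ≤ m
  | .x1 s c m _, tk, ch => 0 < s ∧ tk = ⟨s, some c, m⟩ ∧ ch = false ∧ 2 ≤ m
  | .xFlip s c m, tk, ch => 0 < s ∧ tk = ⟨s, some c, m⟩ ∧ ch = false ∧ 2 ≤ m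
  | .x2, tk, ch => (∃ s c m, 0 < s ∧ tk = ⟨s, some c, m⟩) ∧ ch = false

def BWState.Inv (st : BWState N) : Prop := ∀ i, pcInv (st.pc i) (st.token i) (st.choosing i)

theorem bwStep.inv {st st' : BWState N} {i : Fin N} (h : bwStep st i st') (hI : st.Inv) :
    st'.Inv := by
  intro j
  rcases eq_or_ne j i with rfl | hji
  · have hIj := hI j
    unfold bwStep at h
    split at h <;> rename_i hpc <;> rw [hpc] at hIj
    case h_1 => obtain rfl | ⟨s, hs, rfl⟩ := h <;> simp_all [pcInv]
    case h_12 m =>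
      obtain rfl | rfl := h
      · simpa [hpc] using hIj
      · simp only [Function.update_self]
        obtain ⟨hs, htok, hch, hm⟩ := hIj
        split
        · exact ⟨⟨_, _, _, hs, htok⟩, hch⟩
        · exact ⟨hs, htok, hch, by omega⟩
    all_goals (repeat' split at h) <;> subst h <;> simp_all [pcInv]
  · obtain ⟨hpc, htok, hch⟩ := h.frame hji
    rw [hpc, htok, hch]
    exact hI j

theorem BWExec.inv (e : BWExec N) (n : ℕ) : (e.state n).Inv := by
  induction n with
  | zero =>
    obtain ⟨c0, h0⟩ := e.init
    simp [h0, BWState.Inv, bwInit, pcInv, BWTok.init]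
  | succ n ih => exact (e.step n).inv ih

namespace BWExec

variable (e : BWExec N)

theorem pc_zero (R : Fin N) : (e.state 0).pc R = .remainder := by
  obtain ⟨c0, h0⟩ := e.init
  rw [h0]; rfl

theorem pc_succ (n : ℕ) (R : Fin N) :
    (e.state (n+1)).pc R = (e.state n).pc R ∨
      e.sched n = R ∧ PcMove (e.state n) R ((e.state n).pc R) ((e.state (n+1)).pc R) := by
  rcases eq_or_ne (e.sched n) R with rfl | hR
  · exact (e.step n).pc_move.imp_right fun h => ⟨rfl, h⟩
  · exact .inl ((e.step n).frame (Ne.symm hR)).1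

theorem token_succ (n : ℕ) (R : Fin N) :
    (e.state (n+1)).token R = (e.state n).token R ∨
      (∃ s, (e.state n).pc R = .d1 s ∧ (e.state (n+1)).token R = ⟨s, none, 0⟩) ∨
      (∃ s c m, (e.state n).pc R = .d4 s c m ∧ (e.state (n+1)).token R = ⟨s, some c, m⟩) ∨
      ((e.state n).pc R = .x2 ∧ (e.state (n+1)).token R = BWTok.init) := by
  rcases eq_or_ne (e.sched n) R with rfl | hR
  · exact (e.step n).token_eq_or
  · exact .inl ((e.step n).frame (Ne.symm hR)).2.1

theorem gcolor_const {a b : ℕ} (hab : a ≤ b) (h : ∀ k, a ≤ k → k < b → ¬ bwFlipAt e k) :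
    (e.state b).gcolor = (e.state a).gcolor := by
  induction b, hab using Nat.le_induction with
  | base => rfl
  | succ b hab ih =>
    rw [← ih fun k hak hkb => h k hak (by omega)]
    exact not_not.mp (h b hab (by omega))

theorem exists_flipper {k : ℕ} (h : bwFlipAt e k) :
    ∃ s m, (e.state k).pc (e.sched k) = .xFlip s (e.state k).gcolor m ∧
      (e.state (k+1)).gcolor = (e.state k).gcolor.opp := by
  rcases (e.step k).gcolor_eq_or with hg | ⟨s, c, m, hpc, hg⟩
  · exact absurd hg h
  · obtain rfl : (e.state k).gcolor = c := Color.eq_of_ne_opp fun hc => h (hg.trans hc.symm)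
    exact ⟨s, m, hpc, hg⟩

end BWExec

/-- The stages at which a process owns the colored token `⟨s, some c, m⟩`. -/
inductive BWPc.Holding (s : ℕ) (c : Color) (m : ℕ) : BWPc → Prop
  | d5 : BWPc.Holding s c m (.d5 s c m)
  | w1 (j : ℕ) : BWPc.Holding s c m (.w1 s c m j)
  | wB (j : ℕ) : BWPc.Holding s c m (.wB s c m j)
  | wSame (j : ℕ) : BWPc.Holding s c m (.wSame s c m j)
  | wDiff (j : ℕ) : BWPc.Holding s c m (.wDiff s c m j)
  | cs : BWPc.Holding s c m (.cs s c m)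
  | x1 (j : ℕ) : BWPc.Holding s c m (.x1 s c m j)
  | xFlip : BWPc.Holding s c m (.xFlip s c m)
  | x2 : BWPc.Holding s c m .x2

def BWPc.InDoorway (s : ℕ) (c : Color) : BWPc → Prop
  | .scan s' c' _ _ => s' = s ∧ c' = c
  | .d4 s' c' _ => s' = s ∧ c' = c
  | _ => False

def BWPc.PastLine5 : BWPc → Prop
  | .remainder | .d1 _ | .d2 _ | .d3 _ => False
  | _ => True

namespace pcInv

variable {p : BWPc} {tk : BWTok} {ch : Bool}

theorem holding {s : ℕ} {c : Color} {m : ℕ} (h : pcInv p ⟨s, some c, m⟩ ch) : p.Holding s c m := by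
  cases p <;> simp only [pcInv, BWTok.init, BWTok.mk.injEq, Option.some.injEq] at h
  all_goals first
    | (obtain ⟨-, ⟨rfl, rfl, rfl⟩, -⟩ := h; constructor)
    | constructor
    | simp at h

theorem ne_remainder_of_choosing (h : pcInv p tk true) : p ≠ .remainder := by
  rintro rfl; simp [pcInv] at h

theorem ne_remainder_of_color {c : Color} (h : pcInv p tk ch) (hc : tk.color = some c) :
    p ≠ .remainder := by
  rintro rfl; simp [h.1, BWTok.init] at hc

theorem inDoorway {s : ℕ} {c : Color} (h : pcInv p tk ch) (hp : p.InDoorway s c) :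
    ch = true ∧ tk = ⟨s, none, 0⟩ := by
  cases p <;> simp only [BWPc.InDoorway] at hp
  all_goals
    obtain ⟨rfl, -⟩ := hp
    simp only [pcInv] at h
    first | exact ⟨h.2.2, h.2.1⟩ | exact ⟨h.2.2.1, h.2.1⟩

end pcInv

namespace bwLine5

variable {e : BWExec N} {R : Fin N} {s u : ℕ} {c : Color}

theorem sched_gcolor (h : bwLine5 e R s c u) : e.sched u = R ∧ (e.state u).gcolor = c := by
  rcases e.pc_succ u R with hpc | ⟨hs, hmv⟩
  · rw [h.1, h.2] at hpc; cases hpc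
  · rw [h.1, h.2] at hmv; cases hmv; exact ⟨hs, rfl⟩

theorem session_pos (h : bwLine5 e R s c u) : 0 < s := by
  have hI := e.inv u R
  rw [h.1] at hI
  exact hI.1

theorem not_flip (h : bwLine5 e R s c u) : ¬ bwFlipAt e u := by
  intro hf
  obtain ⟨s', m', hpc, -⟩ := e.exists_flipper hf
  rw [h.sched_gcolor.1, h.1] at hpc
  cases hpc

end bwLine5

/-- A donor for the token number of `R`: a conflicting `c`-colored token with number below `k`,
read by the doorway scan of `R` at a step in `(lo, hi)`. -/
def ScanDonor (e : BWExec N) (R : Fin N) (s : ℕ) (c : Color) (lo hi k : ℕ) : Prop :=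
  ∃ r ∈ Set.Ioo lo hi, ∃ (q : Fin N) (acc sq nq : ℕ), (e.state r).pc R = .scan s c q.val acc ∧
    (e.state r).token q = ⟨sq, some c, nq⟩ ∧ sq ≠ 0 ∧ sq ≠ s ∧ nq < k

theorem ScanDonor.mono {e : BWExec N} {R : Fin N} {s : ℕ} {c : Color} {lo hi hi' k k' : ℕ}
    (h : ScanDonor e R s c lo hi k) (hhi : hi ≤ hi') (hk : k ≤ k') :
    ScanDonor e R s c lo hi' k' := by
  obtain ⟨r, ⟨hlo, hhi'⟩, q, acc, sq, nq, hpc, htok, hsq0, hsq, hnq⟩ := h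
  exact ⟨r, ⟨hlo, by omega⟩, q, acc, sq, nq, hpc, htok, hsq0, hsq, by omega⟩

/-- What the doorway scan of `R` started after step `u` has established by step `n`: a positive
running maximum `acc` was read from a donor. -/
def scanDonorInv (e : BWExec N) (R : Fin N) (s : ℕ) (c : Color) (u n : ℕ) : BWPc → Prop
  | .scan _ _ _ acc => 1 ≤ acc → ScanDonor e R s c u n (acc + 1)
  | .d4 _ _ m => 2 ≤ m → ScanDonor e R s c u n m
  | _ => True

namespace BWExec

variable (e : BWExec N) {R : Fin N} {s : ℕ} {c : Color}

theorem line5_of_enters_doorway {u : ℕ} (hout : ¬ ((e.state u).pc R).InDoorway s c)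
    (hin : ((e.state (u+1)).pc R).InDoorway s c) : bwLine5 e R s c u := by
  rcases e.pc_succ u R with hpc | ⟨-, hmv⟩
  · exact absurd (hpc ▸ hin) hout
  · unfold bwLine5
    generalize (e.state u).pc R = p at hout hmv ⊢
    generalize (e.state (u+1)).pc R = p' at hin hmv ⊢
    cases hmv <;> simp_all [BWPc.InDoorway]

theorem scanDonorInv_succ {u n : ℕ} (hun : u < n)
    (hn : ((e.state n).pc R).InDoorway s c) (hn' : ((e.state (n+1)).pc R).InDoorway s c)
    (ih : scanDonorInv e R s c u n ((e.state n).pc R)) :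
    scanDonorInv e R s c u (n+1) ((e.state (n+1)).pc R) := by
  rcases e.pc_succ n R with hpc | ⟨-, hmv⟩
  · rw [hpc]
    generalize (e.state n).pc R = p at ih
    cases p <;> simp only [scanDonorInv] at ih ⊢ <;> intro hm <;>
      exact (ih hm).mono (by omega) le_rfl
  · generalize hp : (e.state n).pc R = p at hn hmv ih
    generalize (e.state (n+1)).pc R = p' at hn' hmv ⊢
    cases hmv <;> simp only [BWPc.InDoorway] at hn hn'
    case scan s' c' j acc hj =>
      obtain ⟨rfl, rfl⟩ := hn
      simp only [scanDonorInv] at ih ⊢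
      split_ifs with hcond
      · intro _
        obtain ⟨hcol, hsq0, hsq⟩ := hcond
        exact ⟨n, ⟨hun, by omega⟩, ⟨j, hj⟩, acc, _, _, hp, by rw [← hcol], hsq0, hsq,
          Nat.lt_succ_of_le (le_max_right _ _)⟩
      · exact fun hm => (ih hm).mono (by omega) le_rfl
    case scanDone =>
      obtain ⟨rfl, rfl⟩ := hn
      simp only [scanDonorInv] at ih ⊢
      exact fun hm => (ih (by omega)).mono (by omega) le_rfl

theorem exists_line5_of_d4 {a m : ℕ} (h : (e.state a).pc R = .d4 s c m) :
    ∃ u < a, bwLine5 e R s c u ∧ (∀ n, u < n → n ≤ a → ((e.state n).pc R).InDoorway s c) ∧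
      (2 ≤ m → ScanDonor e R s c u a m) := by
  obtain ⟨u, -, hua, hout, hin⟩ := exists_last_entry
    (f := fun n => ((e.state n).pc R).InDoorway s c) (Nat.zero_le a)
    (by simp [pc_zero, BWPc.InDoorway]) (by simp [h, BWPc.InDoorway])
  have hline5 := e.line5_of_enters_doorway hout (hin (u+1) (by omega) hua)
  have hdonor : ∀ n, u + 1 ≤ n → n ≤ a → scanDonorInv e R s c u n ((e.state n).pc R) := by
    intro n hn
    induction n, hn using Nat.le_induction with
    | base => intro; simp [hline5.2, scanDonorInv]
    | succ n hn ih =>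
      intro hna
      exact e.scanDonorInv_succ (by omega) (hin n (by omega) (by omega)) (hin (n+1) (by omega) hna)
        (ih (by omega))
  refine ⟨u, hua, hline5, hin, ?_⟩
  simpa [h, scanDonorInv] using hdonor a hua le_rfl

theorem exists_d4_of_token {T m : ℕ} (h : (e.state T).token R = ⟨s, some c, m⟩) :
    ∃ a < T, (e.state a).pc R = .d4 s c m ∧
      ∀ n, a < n → n ≤ T → (e.state n).token R = ⟨s, some c, m⟩ := by
  obtain ⟨a, -, haT, hout, hin⟩ := exists_last_entry
    (f := fun n => (e.state n).token R = ⟨s, some c, m⟩) (Nat.zero_le T)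
    (by obtain ⟨c0, h0⟩ := e.init; simp [h0, bwInit, BWTok.init]) h
  refine ⟨a, haT, ?_, hin⟩
  have hnext := hin (a+1) (by omega) haT
  rcases e.token_succ a R with htok | ⟨s', -, htok⟩ | ⟨s', c', m', hpc, htok⟩ | ⟨-, htok⟩
  · exact absurd (htok ▸ hnext) hout
  · simp [htok] at hnext
  · simp only [htok, BWTok.mk.injEq, Option.some.injEq] at hnext
    obtain ⟨rfl, rfl, rfl⟩ := hnext
    exact hpc
  · simp [htok, BWTok.init] at hnext

theorem token_persist {σ b sq nq : ℕ} (h : (e.state σ).token R = ⟨sq, some c, nq⟩) (hσb : σ ≤ b) :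
    (∀ n, σ ≤ n → n ≤ b → (e.state n).token R = ⟨sq, some c, nq⟩) ∨
      ∃ x, σ ≤ x ∧ x < b ∧ (e.state x).pc R = .x2 ∧
        ∀ n, σ ≤ n → n ≤ x → (e.state n).token R = ⟨sq, some c, nq⟩ := by
  by_cases hall : ∀ n, σ ≤ n → n ≤ b → (e.state n).token R = ⟨sq, some c, nq⟩
  · exact .inl hall
  obtain ⟨x, hσx, hxb, hx, hx1⟩ := exists_first_exit
    (f := fun n => ∀ k, σ ≤ k → k ≤ n → (e.state k).token R = ⟨sq, some c, nq⟩) hσb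
    (fun k h1 h2 => by rwa [show k = σ by omega]) hall
  have hnext : (e.state (x+1)).token R ≠ ⟨sq, some c, nq⟩ := fun hx' =>
    hx1 fun k h1 h2 => (Nat.lt_or_ge k (x+1)).elim (fun hk => hx k h1 (by omega))
      (fun hk => by rwa [show k = x + 1 by omega])
  have htokx := hx x hσx le_rfl
  have hI := e.inv x R
  rcases e.token_succ x R with htok | ⟨s', hpc, -⟩ | ⟨s', c', m', hpc, -⟩ | ⟨hpc, -⟩
  · exact absurd (htok.trans htokx) hnext
  · rw [hpc, htokx] at hI; simp [pcInv, BWTok.init] at hI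
  · rw [hpc, htokx] at hI; simp [pcInv] at hI
  · exact .inr ⟨x, hσx, hxb, hpc, hx⟩

theorem pastLine5 {u T : ℕ} (h : bwLine5 e R s c u)
    (hact : ∀ n, u < n → n ≤ T → (e.state n).pc R ≠ .remainder) :
    ∀ n, u < n → n ≤ T → ((e.state n).pc R).PastLine5 := by
  intro n hun
  induction n, hun using Nat.le_induction with
  | base => intro; rw [h.2]; trivial
  | succ n hun ih =>
    intro hnT
    have hne := hact (n+1) (by omega) hnT
    rcases e.pc_succ n R with hpc | ⟨-, hmv⟩
    · rw [hpc]; exact ih (by omega)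
    · have ih := ih (by omega)
      generalize (e.state n).pc R = p at ih hmv
      generalize (e.state (n+1)).pc R = p' at hne hmv ⊢
      cases hmv <;> simp_all [BWPc.PastLine5]

theorem line5_unique {s' u u' T : ℕ} {c' : Color} (h : bwLine5 e R s c u)
    (h' : bwLine5 e R s' c' u') (hu : u ≤ T) (hu' : u' ≤ T)
    (hact : ∀ n, u < n → n ≤ T → (e.state n).pc R ≠ .remainder)
    (hact' : ∀ n, u' < n → n ≤ T → (e.state n).pc R ≠ .remainder) : u = u' := by
  rcases lt_trichotomy u u' with hlt | heq | hlt
  · have := e.pastLine5 h hact u' hlt hu'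
    rw [h'.1] at this
    exact this.elim
  · exact heq
  · have := e.pastLine5 h' hact' u hlt hu
    rw [h.1] at this
    exact this.elim

theorem exists_x2_before_numberOk {q : Fin N} {m lo hi σ sq nq : ℕ}
    (hchk : ∃ k ∈ Set.Ioo lo hi, (e.state k).NumberOk R s c m q)
    (htok : (e.state σ).token q = ⟨sq, some c, nq⟩) (hσ : σ ≤ lo) (hsq0 : sq ≠ 0) (hsq : sq ≠ s)
    (hnq : nq < m) :
    ∃ x, σ ≤ x ∧ x < hi ∧ (e.state x).pc q = .x2 ∧
      ∀ n, σ ≤ n → n ≤ x → (e.state n).token q = ⟨sq, some c, nq⟩ := by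
  obtain ⟨k, ⟨hlo, hhi⟩, hok⟩ := hchk
  rcases e.token_persist htok (show σ ≤ k by omega) with hconst | ⟨x, hσx, hxk, hpc, hx⟩
  · rw [BWState.NumberOk, hconst k (by omega) le_rfl] at hok
    simp only [ne_eq, not_true_eq_false, false_or] at hok
    omega
  · exact ⟨x, hσx, by omega, hpc, hx⟩

end BWExec

/-- The invocation of `R` with session `s`, color `c` and token number `m`, followed up to
time `T`: its line-5 read is step `u` and its token write (line `d4`) is step `a`. -/
structure Invocation (e : BWExec N) (R : Fin N) (s : ℕ) (c : Color) (m u a T : ℕ) : Prop where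
  line5 : bwLine5 e R s c u
  line5_lt : u < a
  lt : a < T
  d4 : (e.state a).pc R = .d4 s c m
  doorway : ∀ n, u ≤ n → n ≤ a → (e.state n).choosing R = true ∧ (e.state n).token R = ⟨s, none, 0⟩
  token : ∀ n, a < n → n ≤ T → (e.state n).token R = ⟨s, some c, m⟩
  donor : 2 ≤ m → ScanDonor e R s c u a m

theorem BWExec.invocation_of_token (e : BWExec N) {R : Fin N} {s : ℕ} {c : Color} {m T : ℕ}
    (h : (e.state T).token R = ⟨s, some c, m⟩) : ∃ u a, Invocation e R s c m u a T := by
  obtain ⟨a, haT, hd4, htok⟩ := e.exists_d4_of_token h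
  obtain ⟨u, hua, hline5, hdoor, hdonor⟩ := e.exists_line5_of_d4 hd4
  refine ⟨u, a, hline5, hua, haT, hd4, fun n hun hna => ?_, htok, hdonor⟩
  have hI := e.inv n R
  rcases hun.eq_or_lt with rfl | hun
  · rw [hline5.1] at hI; exact ⟨hI.2.2, hI.2.1⟩
  · exact hI.inDoorway (hdoor n hun hna)

namespace Invocation

variable {e : BWExec N} {R : Fin N} {s : ℕ} {c : Color} {m u a T : ℕ}

theorem restrict (h : Invocation e R s c m u a T) {T' : ℕ} (haT' : a < T') (hT' : T' ≤ T) :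
    Invocation e R s c m u a T' :=
  { h with lt := haT', token := fun n h1 h2 => h.token n h1 (h2.trans hT') }

theorem pc_ne_remainder (h : Invocation e R s c m u a T) :
    ∀ n, u < n → n ≤ T → (e.state n).pc R ≠ .remainder := by
  intro n hun hnT
  have hI := e.inv n R
  rcases Nat.lt_or_ge a n with han | hna
  · rw [h.token n han hnT] at hI
    exact hI.ne_remainder_of_color rfl
  · rw [(h.doorway n hun.le hna).1] at hI
    exact hI.ne_remainder_of_choosing

theorem le_of_exitOk (h : Invocation e R s c.opp m u a T) {k : ℕ} (hkT : k ≤ T)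
    (hok : (e.state k).ExitOk c R) : k ≤ a := by
  by_contra! hak
  rw [BWState.ExitOk, h.token k hak hkT] at hok
  exact hok ⟨h.line5.session_pos.ne', rfl⟩

theorem session_eq_of_choosingOk (h : Invocation e R s c m u a T) {k s' : ℕ} (huk : u ≤ k)
    (hka : k ≤ a) (hok : (e.state k).ChoosingOk s' R) : s = s' := by
  obtain ⟨hch, htok⟩ := h.doorway k huk hka
  rcases hok with hok | hok
  · rw [hch] at hok; cases hok
  · rwa [htok] at hok

end Invocation

def PassedWaiting (e : BWExec N) (R : Fin N) (s : ℕ) (c : Color) (m lo hi : ℕ) (q : Fin N) :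
    Prop :=
  (∃ k ∈ Set.Ioo lo hi, (e.state k).ChoosingOk s q) ∧
    ∃ k ∈ Set.Ioo lo hi, (e.state k).NumberOk R s c m q

theorem PassedWaiting.mono {e : BWExec N} {R : Fin N} {s : ℕ} {c : Color} {m lo hi hi' : ℕ}
    {q : Fin N} (h : PassedWaiting e R s c m lo hi q) (hhi : hi ≤ hi') :
    PassedWaiting e R s c m lo hi' q :=
  have hsub := Set.Ioo_subset_Ioo_right hhi
  ⟨h.1.imp fun _ hk => ⟨hsub hk.1, hk.2⟩, h.2.imp fun _ hk => ⟨hsub hk.1, hk.2⟩⟩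

/-- The progress of the waiting room and exit scan of `R`, which wrote its token at step `a`,
as established by time `n`; `γ` is a time by which all waiting-room checks were passed. -/
def exitProgress (e : BWExec N) (R : Fin N) (s : ℕ) (c : Color) (m a n : ℕ) : BWPc → Prop
  | .w1 _ _ _ j => ∀ q : Fin N, q.val < j → PassedWaiting e R s c m a n q
  | .wB _ _ _ j | .wSame _ _ _ j => (∀ q : Fin N, q.val < j → PassedWaiting e R s c m a n q) ∧
      ∀ q : Fin N, q.val = j → ∃ k ∈ Set.Ioo a n, (e.state k).ChoosingOk s q
  | .wDiff _ _ _ j => ∀ q : Fin N, q.val ≤ j → PassedWaiting e R s c m a n q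
  | .cs _ _ _ | .x2 => ∀ q, PassedWaiting e R s c m a n q
  | .x1 _ _ _ j => ∃ γ ∈ Set.Ioo a n, (∀ q, PassedWaiting e R s c m a γ q) ∧
      ∀ q : Fin N, q.val < j → ∃ k ∈ Set.Ioo γ n, (e.state k).ExitOk c q
  | .xFlip _ _ _ => ∃ γ ∈ Set.Ioo a n, (∀ q, PassedWaiting e R s c m a γ q) ∧
      ∀ q, ∃ k ∈ Set.Ioo γ n, (e.state k).ExitOk c q
  | _ => True

theorem exitProgress_mono {e : BWExec N} {R : Fin N} {s : ℕ} {c : Color} {m a n : ℕ} {p : BWPc}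
    (h : exitProgress e R s c m a n p) : exitProgress e R s c m a (n+1) p := by
  have hsub {lo : ℕ} : Set.Ioo lo n ⊆ Set.Ioo lo (n+1) := Set.Ioo_subset_Ioo_right n.le_succ
  cases p <;> simp only [exitProgress] at h ⊢
  case w1 | wDiff => exact fun q hq => (h q hq).mono n.le_succ
  case cs | x2 => exact fun q => (h q).mono n.le_succ
  case wB | wSame =>
    exact ⟨fun q hq => (h.1 q hq).mono n.le_succ,
      fun q hq => (h.2 q hq).imp fun _ hk => ⟨hsub hk.1, hk.2⟩⟩
  case x1 =>
    obtain ⟨γ, hγ, hpass, hexit⟩ := h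
    exact ⟨γ, hsub hγ, hpass, fun q hq => (hexit q hq).imp fun _ hk => ⟨hsub hk.1, hk.2⟩⟩
  case xFlip =>
    obtain ⟨γ, hγ, hpass, hexit⟩ := h
    exact ⟨γ, hsub hγ, hpass, fun q => (hexit q).imp fun _ hk => ⟨hsub hk.1, hk.2⟩⟩

theorem BWExec.exitProgress_succ (e : BWExec N) {R : Fin N} {s : ℕ} {c : Color} {m a n : ℕ}
    (han : a < n) (htok : (e.state n).token R = ⟨s, some c, m⟩)
    (ih : exitProgress e R s c m a n ((e.state n).pc R)) :
    exitProgress e R s c m a (n+1) ((e.state (n+1)).pc R) := by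
  have hhold : ((e.state n).pc R).Holding s c m := by
    have hI := e.inv n R
    rw [htok] at hI
    exact hI.holding
  rcases e.pc_succ n R with hpc | ⟨-, hmv⟩
  · rw [hpc]; exact exitProgress_mono ih
  generalize (e.state n).pc R = p at hhold hmv ih
  generalize (e.state (n+1)).pc R = p' at hmv ⊢
  have hn : n ∈ Set.Ioo a (n+1) := ⟨han, n.lt_succ_self⟩
  cases hhold <;> cases hmv <;> simp only [exitProgress] at ih ⊢
  case d5.d5 => exact fun q hq => absurd hq q.val.not_lt_zero
  case w1.w1 j hj hok =>
    refine ⟨fun q hq => (ih q hq).mono n.le_succ, fun q hq => ⟨n, hn, ?_⟩⟩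
    rwa [show q = ⟨j, hj⟩ from Fin.ext hq]
  case w1.w1Done j hj => exact fun q => (ih q (by omega)).mono n.le_succ
  case wB.wBSame j hj hcol =>
    exact ⟨fun q hq => (ih.1 q hq).mono n.le_succ,
      fun q hq => (ih.2 q hq).imp fun _ hk => ⟨Set.Ioo_subset_Ioo_right n.le_succ hk.1, hk.2⟩⟩
  case wB.wBDiff j hj hcol =>
    intro q hq
    rcases hq.lt_or_eq with hq | hq
    · exact (ih.1 q hq).mono n.le_succ
    · obtain rfl : q = ⟨j, hj⟩ := Fin.ext hq
      obtain ⟨k, ⟨hk1, hk2⟩, hok⟩ := ih.2 ⟨j, hj⟩ rfl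
      -- the color read at this step already satisfies the number check
      exact ⟨⟨k, ⟨hk1, by omega⟩, hok⟩, n, hn, .inr (.inl hcol)⟩
  case wSame.wSame j hj hok =>
    intro q hq
    rcases Nat.lt_succ_iff_lt_or_eq.mp hq with hq | hq
    · exact (ih.1 q hq).mono n.le_succ
    · obtain rfl : q = ⟨j, hj⟩ := Fin.ext hq
      obtain ⟨k, ⟨hk1, hk2⟩, hok'⟩ := ih.2 ⟨j, hj⟩ rfl
      exact ⟨⟨k, ⟨hk1, by omega⟩, hok'⟩, n, hn, hok⟩
  case wDiff.wDiff j hj _ => exact fun q hq => (ih q (by omega)).mono n.le_succ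
  case cs.exitShort => exact fun q => (ih q).mono n.le_succ
  case cs.exitScan => exact ⟨n, hn, ih, fun q hq => absurd hq q.val.not_lt_zero⟩
  case x1.x1Found =>
    obtain ⟨γ, ⟨-, hγ⟩, hpass, -⟩ := ih
    exact fun q => (hpass q).mono (by omega)
  case x1.x1Next j hj hok =>
    obtain ⟨γ, ⟨hγ1, hγ2⟩, hpass, hexit⟩ := ih
    refine ⟨γ, ⟨hγ1, by omega⟩, hpass, fun q hq => ?_⟩
    rcases Nat.lt_succ_iff_lt_or_eq.mp hq with hq | hq
    · obtain ⟨k, ⟨hk1, hk2⟩, hok'⟩ := hexit q hq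
      exact ⟨k, ⟨hk1, by omega⟩, hok'⟩
    · obtain rfl : q = ⟨j, hj⟩ := Fin.ext hq
      exact ⟨n, ⟨hγ2, n.lt_succ_self⟩, hok⟩
  case x1.x1Done j hj =>
    obtain ⟨γ, ⟨hγ1, hγ2⟩, hpass, hexit⟩ := ih
    refine ⟨γ, ⟨hγ1, by omega⟩, hpass, fun q => ?_⟩
    obtain ⟨k, ⟨hk1, hk2⟩, hok⟩ := hexit q (by omega)
    exact ⟨k, ⟨hk1, by omega⟩, hok⟩
  case xFlip.flip =>
    obtain ⟨γ, ⟨-, hγ⟩, hpass, -⟩ := ih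
    exact fun q => (hpass q).mono (by omega)

theorem Invocation.exitProgress {e : BWExec N} {R : Fin N} {s : ℕ} {c : Color} {m u a T : ℕ}
    (h : Invocation e R s c m u a T) :
    ∀ n, a < n → n ≤ T → exitProgress e R s c m a n ((e.state n).pc R) := by
  intro n han
  induction n, han using Nat.le_induction with
  | base =>
    intro hT
    rcases e.pc_succ a R with hpc | ⟨-, hmv⟩
    · have hI := e.inv (a+1) R
      rw [hpc, h.d4, h.token (a+1) a.lt_succ_self hT] at hI
      simp [pcInv] at hI
    · rw [h.d4] at hmv
      generalize (e.state (a+1)).pc R = p' at hmv ⊢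
      cases hmv
      trivial
  | succ n han ih =>
    intro hT
    exact e.exitProgress_succ han (h.token n han (by omega)) (ih (by omega))

namespace BWExec

variable (e : BWExec N) {R : Fin N} {s : ℕ} {c : Color} {m T : ℕ}

theorem exists_invocation_of_xFlip (h : (e.state T).pc R = .xFlip s c m) :
    2 ≤ m ∧ ∃ u a, Invocation e R s c m u a T ∧ ∃ γ ∈ Set.Ioo a T,
      (∀ q, PassedWaiting e R s c m a γ q) ∧ ∀ q, ∃ k ∈ Set.Ioo γ T, (e.state k).ExitOk c q := by
  have hI := e.inv T R
  rw [h] at hI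
  obtain ⟨u, a, hR⟩ := e.invocation_of_token hI.2.1
  have hprog := hR.exitProgress T hR.lt le_rfl
  rw [h] at hprog
  exact ⟨hI.2.2.2, u, a, hR, hprog⟩

theorem exists_invocation_of_x2 (h : (e.state T).pc R = .x2)
    (htok : (e.state T).token R = ⟨s, some c, m⟩) :
    ∃ u a, Invocation e R s c m u a T ∧ ∀ q, PassedWaiting e R s c m a T q := by
  obtain ⟨u, a, hR⟩ := e.invocation_of_token htok
  have hprog := hR.exitProgress T hR.lt le_rfl
  rw [h] at hprog
  exact ⟨u, a, hR, hprog⟩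

end BWExec

def NoStaleReader (e : BWExec N) (k : ℕ) : Prop :=
  ∀ (Q : Fin N) (s m u a T : ℕ), Invocation e Q s (e.state (k+1)).gcolor m u a T → u < k → k ≤ T →
    False

theorem Invocation.no_flip_since_line5 {e : BWExec N} {Q : Fin N} {s : ℕ} {c : Color} {m u a T : ℕ}
    (hsafe : ∀ k < T, bwFlipAt e k → NoStaleReader e k) (h : Invocation e Q s c m u a T)
    (hT : (e.state T).gcolor = c) : ∀ k, u ≤ k → k < T → ¬ bwFlipAt e k := by
  intro k huk hkT hk
  obtain ⟨x, hux, hxT, hx, hafter⟩ := exists_last_entry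
    (f := fun n => ∀ k, n ≤ k → k < T → ¬ bwFlipAt e k) (huk.trans hkT.le)
    (fun hno => hno k huk hkT hk) (fun k hTk hkT => absurd hTk (not_le.2 hkT))
  have hstable := hafter (x+1) x.lt_succ_self hxT
  have hflip : bwFlipAt e x := by
    push Not at hx
    obtain ⟨k', hxk', hk'T, hk'⟩ := hx
    rcases hxk'.eq_or_lt with rfl | hlt
    · exact hk'
    · exact absurd hk' (hstable k' hlt hk'T)
  have hnew : (e.state (x+1)).gcolor = c := hT ▸ (e.gcolor_const hxT hstable).symm
  rcases hux.eq_or_lt with rfl | hux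
  · exact h.line5.not_flip hflip
  · exact hsafe x hxT hflip Q s m u a T (hnew ▸ h) hux hxT.le

theorem Invocation.gcolor_eq {e : BWExec N} {Q : Fin N} {s : ℕ} {c : Color} {m u a T : ℕ}
    (hsafe : ∀ k < T, bwFlipAt e k → NoStaleReader e k) (h : Invocation e Q s c m u a T)
    (hT : (e.state T).gcolor = c) : ∀ n, u ≤ n → n ≤ T → (e.state n).gcolor = c := by
  intro n hun hnT
  rw [← hT]
  exact (e.gcolor_const hnT fun k hnk hkT =>
    h.no_flip_since_line5 hsafe hT k (hun.trans hnk) hkT).symm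

theorem noStaleReader_of_forall_lt {e : BWExec N} {k : ℕ}
    (hsafe : ∀ k' < k, bwFlipAt e k' → NoStaleReader e k') (hk : bwFlipAt e k) :
    NoStaleReader e k := by
  intro Q sQ mQ uQ b y hQ huQ hky
  obtain ⟨sR, mR, hpcR, hnew⟩ := e.exists_flipper hk
  set d := (e.state k).gcolor
  rw [hnew] at hQ
  obtain ⟨hmR, u, a, hR, γ, ⟨haγ, hγk⟩, hpass, hexit⟩ := e.exists_invocation_of_xFlip hpcR
  have hua := hR.line5_lt
  have hcol := hR.gcolor_eq hsafe rfl
  have hQcol := hQ.line5.sched_gcolor.2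
  have huQu : uQ < u := by
    by_contra! huuQ
    exact d.opp_ne (hQcol.symm.trans (hcol uQ huuQ (by omega)))
  -- The exit scan of the flipper passed `Q`, so `Q` had not yet written its token.
  obtain ⟨σ, ⟨hγσ, hσk⟩, hσ⟩ := hexit Q
  have hσb : σ ≤ b := hQ.le_of_exitOk (by omega) hσ
  obtain ⟨⟨ω, ⟨haω, hωγ⟩, hω⟩, -⟩ := hpass Q
  have hsQ : sQ = sR := hQ.session_eq_of_choosingOk (by omega) (by omega) hω
  obtain ⟨σd, ⟨huσd, hσda⟩, D, -, sd, nd, -, htokD, hsd0, hsdR, hnd⟩ := hR.donor hmR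
  obtain ⟨xd, hσdxd, hxdγ, hpcD, htokDx⟩ :=
    e.exists_x2_before_numberOk (hpass D).2 htokD hσda.le hsd0 hsdR hnd
  obtain ⟨ud, ad, hD, hpassD⟩ := e.exists_invocation_of_x2 hpcD (htokDx xd hσdxd le_rfl)
  have hudad := hD.line5_lt
  have hadσd : ad < σd := by
    by_contra! hσdad
    have := (hD.doorway ad hD.line5_lt.le le_rfl).2
    rw [htokDx ad hσdad hD.lt.le] at this
    simp at this
  obtain ⟨⟨ρ, ⟨hadρ, hρxd⟩, hρ⟩, -⟩ := hpassD Q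
  rcases Nat.lt_or_ge ρ uQ with hρuQ | huQρ
  · have := (hD.restrict hadσd (by omega)).gcolor_eq (fun k' hk' => hsafe k' (by omega))
      (hcol σd huσd.le (by omega)) uQ (by omega) (by omega)
    exact d.opp_ne (hQcol.symm.trans this)
  · exact hsdR (hsQ ▸ (hQ.session_eq_of_choosingOk huQρ (by omega) hρ).symm)

theorem BWExec.noStaleReader (e : BWExec N) (k : ℕ) (hk : bwFlipAt e k) : NoStaleReader e k := by
  induction k using Nat.strong_induction_on with
  | _ k ih => exact noStaleReader_of_forall_lt ih hk

/-- Two processes about to flip GlobalColor at the same time want to flip it the same way: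
each exit scan would otherwise have found the other's token. -/
theorem BWExec.xFlip_color_eq (e : BWExec N) {p F : Fin N} {s sF m mF t : ℕ} {c cF : Color}
    (hp : (e.state t).pc p = .xFlip s c m) (hF : (e.state t).pc F = .xFlip sF cF mF) : cF = c := by
  by_contra hne
  obtain rfl : cF = c.opp := Color.eq_opp_of_ne hne
  obtain ⟨-, u, a, hP, γ, ⟨haγ, hγt⟩, -, hexitP⟩ := e.exists_invocation_of_xFlip hp
  obtain ⟨-, uF, aF, hPF, γF, ⟨haγF, hγFt⟩, -, hexitF⟩ := e.exists_invocation_of_xFlip hF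
  obtain ⟨k, ⟨hγk, hkt⟩, hk⟩ := hexitP F
  obtain ⟨k', ⟨hγk', hk't⟩, hk'⟩ := hexitF p
  have hkaF := hPF.le_of_exitOk hkt.le hk
  have hk'a := (c.opp_opp.symm ▸ hP : Invocation e p s c.opp.opp m u a t).le_of_exitOk hk't.le hk'
  omega

end

/-- A time `k` lies in the interval `I` ended by the flip at `t` iff no flip occurs in `[k, t)`. -/
theorem bw_flip_witness {N : ℕ} (e : BWExec N) (p : Fin N) (s : ℕ) (c : Color) (m : ℕ)
    (t u : ℕ)
    (hline5 : bwLine5 e p s c u) (hut : u < t)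
    (hactive : bwActiveThrough e p u t)
    (hpc : (e.state t).pc p = BWPc.xFlip s c m)
    (hflip : bwFlipAt e t) :
    (∀ k, u ≤ k → k < t → ¬ bwFlipAt e k) ∧
    ∃ (q : Fin N) (sq nq uq r acc : ℕ), q ≠ p ∧ sq ≠ 0 ∧ sq ≠ s ∧ nq < m ∧
      bwLine5 e q sq c uq ∧ uq < t ∧ (∀ k, uq ≤ k → k < t → ¬ bwFlipAt e k) ∧
      u < r ∧ r < t ∧ (e.state r).pc p = BWPc.scan s c q.val acc ∧
      (e.state r).token q = ⟨sq, some c, nq⟩ ∧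
      (∀ k, uq < k → k ≤ r → (e.state k).pc q ≠ BWPc.remainder) := by
  obtain ⟨hm, u₀, a, hp, -⟩ := e.exists_invocation_of_xFlip hpc
  obtain rfl : u₀ = u :=
    e.line5_unique hp.line5 hline5 (by have := hp.line5_lt; have := hp.lt; omega) hut.le
      hp.pc_ne_remainder hactive
  have hcol : (e.state t).gcolor = c := by
    obtain ⟨sF, mF, hF, -⟩ := e.exists_flipper hflip
    exact e.xFlip_color_eq hpc hF
  have hstable := hp.no_flip_since_line5 (fun k _ => e.noStaleReader k) hcol
  obtain ⟨r, ⟨hur, hra⟩, q, acc, sq, nq, hpcr, htokr, hsq0, hsq, hnq⟩ := hp.donor hm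
  have hat := hp.lt
  obtain ⟨uq, bq, hq⟩ := e.invocation_of_token htokr
  have hqp : q ≠ p := by
    rintro rfl
    rw [(hp.doorway r hur.le hra.le).2] at htokr
    simp at htokr
  have hcolr := hp.gcolor_eq (fun k _ => e.noStaleReader k) hcol r hur.le (by omega)
  have hstable_q := hq.no_flip_since_line5 (fun k _ => e.noStaleReader k) hcolr
  refine ⟨hstable, q, sq, nq, uq, r, acc, hqp, hsq0, hsq, hnq, hq.line5,
    by have := hq.line5_lt; have := hq.lt; omega, fun k h1 h2 => ?_, hur, by omega, hpcr, htokr,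
    hq.pc_ne_remainder⟩
  rcases Nat.lt_or_ge k r with hkr | hrk
  · exact hstable_q k h1 hkr
  · exact hstable k (by omega) h2
end

section
/- In every execution of the BWBGME algorithm, after a process P_i performs its read of GlobalColor (line 5), GlobalColor cannot be flipped more than once before P_i completes its exit section (resetting Token[i] to (0,⊥,0)). -/
/-!
Suppose the claim fails and take a counterexample whose second flip `g` is as early as
possible: process `i` reads `c` at line 5, GlobalColor is flipped at `f` and at `g`, and `i` is
still active. By minimality GlobalColor is `c` at `f` and `c.opp` on `(f, g]`, so the process `q`
flipping at `g` has color `c.opp`. A process of color `c.opp` whose line-5 read precedes `f` and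
which is still active at `f` has seen a flip before `f` and another at `f`, an earlier
counterexample; so `q` read after `f`. While `q` ran its waiting room and its exit scan, `i` had
therefore not yet published its token, and `q` could only get past `i` because they share a
session. Since `q` flips, its number is not `1`, so its doorway counted a conflicting token of a
process `d` of color `c.opp`, which `q` then had to wait out: `d` exits before `g`, and by
minimality again `d` read its color after `f`. But then `d`'s waiting room cannot get past `i`:
`i` holds a published token of color `c` in another session while GlobalColor stays `c.opp`.
-/

theorem Nat.exists_boundary {P : ℕ → Prop} {a b : ℕ} (hab : a ≤ b) (ha : P a) (hb : ¬ P b) :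
    ∃ k, a ≤ k ∧ k < b ∧ P k ∧ ¬ P (k + 1) := by
  induction b, hab using Nat.le_induction with
  | base => exact absurd ha hb
  | succ b hab ih =>
    by_cases hPb : P b
    · exact ⟨b, hab, b.lt_succ_self, hPb, hb⟩
    · obtain ⟨k, hak, hkb, hk⟩ := ih hPb
      exact ⟨k, hak, hkb.trans b.lt_succ_self, hk⟩

theorem Color.opp_opp_s10 (c : Color) : c.opp.opp = c := by cases c <;> rfl

theorem Color.opp_eq_iff_ne {a b : Color} : a.opp = b ↔ a ≠ b := by
  cases a <;> cases b <;> decide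

theorem Color.ne_opp (c : Color) : c ≠ c.opp := Color.opp_eq_iff_ne.mp rfl

/-! ### Single steps -/

def BWTok.IsRival (tk : BWTok) (s : ℕ) (c : Color) : Prop :=
  tk.color = some c ∧ tk.session ≠ 0 ∧ tk.session ≠ s

def bwSameColorReleased {N : ℕ} (st : BWState N) (r : Fin N) (s : ℕ) (c : Color) (m : ℕ)
    (k : Fin N) : Prop :=
  (m < (st.token k).number ∨ (m = (st.token k).number ∧ r.val < k.val)) ∨
    (st.token k).color ≠ some c ∨ (st.token k).session = 0 ∨ (st.token k).session = s

def bwDiffColorReleased {N : ℕ} (st : BWState N) (s : ℕ) (c : Color) (k : Fin N) : Prop :=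
  st.gcolor ≠ c ∨ (st.token k).color = some c ∨ (st.token k).session = 0 ∨
    (st.token k).session = s

/-- The transition table read backwards: `bwPcPred st r p' p` holds when a step of `r` from `st`
can take it from `p` to `p' ≠ p`, and records the guard that this step evaluated. Only the
targets `p'` needed to trace an invocation back are constrained. -/
def bwPcPred {N : ℕ} (st : BWState N) (r : Fin N) : BWPc → BWPc → Prop
  | .scan s c j m, p =>
      (j = 0 ∧ m = 0 ∧ p = .d3 s ∧ st.gcolor = c) ∨
      ∃ j' m', j = j' + 1 ∧ p = .scan s c j' m' ∧ ∃ h : j' < N, m = m' ∨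
        ((st.token ⟨j', h⟩).IsRival s c ∧ m = max m' (st.token ⟨j', h⟩).number)
  | .d4 s c m, p => ∃ j m', N ≤ j ∧ p = .scan s c j m' ∧ m = m' + 1
  | .d5 s c m, p => p = .d4 s c m
  | .w1 s c m j, p => (j = 0 ∧ p = .d5 s c m) ∨ ∃ j', j = j' + 1 ∧ ∃ h : j' < N,
      (p = .wSame s c m j' ∧ bwSameColorReleased st r s c m ⟨j', h⟩) ∨
        (p = .wDiff s c m j' ∧ bwDiffColorReleased st s c ⟨j', h⟩)
  | .wB s c m j, p => p = .w1 s c m j ∧ ∃ h : j < N,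
      st.choosing ⟨j, h⟩ = false ∨ (st.token ⟨j, h⟩).session = s
  | .wSame s c m j, p => p = .wB s c m j ∧ ∃ h : j < N, (st.token ⟨j, h⟩).color = some c
  | .wDiff s c m j, p => p = .wB s c m j ∧ ∃ h : j < N, (st.token ⟨j, h⟩).color ≠ some c
  | .cs s c m, p => ∃ j, N ≤ j ∧ p = .w1 s c m j
  | .x1 s c m j, p => (j = 0 ∧ m ≠ 1 ∧ p = .cs s c m) ∨ ∃ j', j = j' + 1 ∧ p = .x1 s c m j' ∧
      ∃ h : j' < N, ¬((st.token ⟨j', h⟩).session ≠ 0 ∧ (st.token ⟨j', h⟩).color = some c.opp)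
  | .xFlip s c m, p => ∃ j, N ≤ j ∧ p = .x1 s c m j
  | .x2, p => (∃ s c m, p = .xFlip s c m) ∨ (∃ s c m j, p = .x1 s c m j) ∨ ∃ s c, p = .cs s c 1
  | _, _ => True

def bwLocalInv : BWPc → BWTok → Bool → Prop
  | .remainder, tk, ch => tk = BWTok.init ∧ ch = false
  | .d1 s, tk, ch => tk = BWTok.init ∧ ch = false ∧ s ≠ 0
  | .d2 s, tk, ch => tk = ⟨s, none, 0⟩ ∧ ch = false ∧ s ≠ 0
  | .d3 s, tk, ch => tk = ⟨s, none, 0⟩ ∧ ch = true ∧ s ≠ 0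
  | .scan s _ _ _, tk, ch => tk = ⟨s, none, 0⟩ ∧ ch = true ∧ s ≠ 0
  | .d4 s _ _, tk, ch => tk = ⟨s, none, 0⟩ ∧ ch = true ∧ s ≠ 0
  | .d5 s c m, tk, ch => tk = ⟨s, some c, m⟩ ∧ ch = true ∧ s ≠ 0
  | .w1 s c m _, tk, ch => tk = ⟨s, some c, m⟩ ∧ ch = false ∧ s ≠ 0
  | .wB s c m _, tk, ch => tk = ⟨s, some c, m⟩ ∧ ch = false ∧ s ≠ 0
  | .wSame s c m _, tk, ch => tk = ⟨s, some c, m⟩ ∧ ch = false ∧ s ≠ 0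
  | .wDiff s c m _, tk, ch => tk = ⟨s, some c, m⟩ ∧ ch = false ∧ s ≠ 0
  | .cs s c m, tk, ch => tk = ⟨s, some c, m⟩ ∧ ch = false ∧ s ≠ 0
  | .x1 s c m _, tk, ch => tk = ⟨s, some c, m⟩ ∧ ch = false ∧ s ≠ 0
  | .xFlip s c m, tk, ch => tk = ⟨s, some c, m⟩ ∧ ch = false ∧ s ≠ 0
  | .x2, _, ch => ch = false

def BWPc.PastTokenWrite : BWPc → Prop
  | .d5 .. | .w1 .. | .wB .. | .wSame .. | .wDiff .. | .cs .. | .x1 .. | .xFlip .. | .x2 => True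
  | _ => False

def bwScanning {N : ℕ} (st : BWState N) (r : Fin N) (s : ℕ) (c : Color) : Prop :=
  (∃ j m, st.pc r = .scan s c j m) ∨ ∃ m, st.pc r = .d4 s c m

def bwPublished {N : ℕ} (st : BWState N) (r : Fin N) (s : ℕ) (c : Color) : Prop :=
  (st.pc r).PastTokenWrite ∧ ∃ m, st.token r = ⟨s, some c, m⟩

section Step

variable {N : ℕ} {st st' : BWState N} {r : Fin N} {s : ℕ} {c : Color}

theorem bwStep_frame (h : bwStep st r st') {j : Fin N} (hj : j ≠ r) :
    st'.pc j = st.pc j ∧ st'.token j = st.token j ∧ st'.choosing j = st.choosing j := by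
  unfold bwStep at h
  split at h <;> (try split_ifs at h) <;> (try obtain rfl | h := h) <;>
    (try obtain ⟨_, _, h⟩ := h) <;> (try subst h) <;>
    first | exact ⟨rfl, rfl, rfl⟩ | simp [Function.update_of_ne hj]

theorem bwStep_gcolor (h : bwStep st r st') (hne : st'.gcolor ≠ st.gcolor) :
    ∃ s m, st.pc r = .xFlip s st.gcolor m ∧ st'.pc r = .x2 := by
  unfold bwStep at h
  split at h <;> (try split_ifs at h) <;> (try obtain rfl | h := h) <;>
    (try obtain ⟨_, _, h⟩ := h) <;> (try subst h) <;>
    simp_all [Color.opp_eq_iff_ne]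

theorem bwStep_token (h : bwStep st r st') (hne : st'.token r ≠ st.token r) :
    (∃ s, st.pc r = .d1 s) ∨ (∃ s c m, st.pc r = .d4 s c m) ∨
      (st.pc r = .x2 ∧ st'.pc r = .remainder) := by
  unfold bwStep at h
  split at h <;> (try split_ifs at h) <;> (try obtain rfl | h := h) <;>
    (try obtain ⟨_, _, h⟩ := h) <;> (try subst h) <;>
    simp_all

theorem bwStep_pcPred (h : bwStep st r st') (hne : st'.pc r ≠ st.pc r) :
    bwPcPred st r (st'.pc r) (st.pc r) := by
  unfold bwStep at h
  split at h <;> (try split_ifs at h) <;> (try obtain rfl | h := h) <;>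
    (try obtain ⟨_, _, h⟩ := h) <;> (try subst h) <;>
    simp_all [bwPcPred, BWTok.IsRival, bwSameColorReleased, bwDiffColorReleased]

theorem bwStep_localInv (h : bwStep st r st')
    (hinv : bwLocalInv (st.pc r) (st.token r) (st.choosing r)) :
    bwLocalInv (st'.pc r) (st'.token r) (st'.choosing r) := by
  unfold bwStep at h
  split at h <;> (try split_ifs at h) <;> (try obtain rfl | h := h) <;>
    (try obtain ⟨_, _, h⟩ := h) <;> (try subst h) <;>
    simp_all [bwLocalInv, Nat.pos_iff_ne_zero]

theorem bwStep_x2 (h : bwStep st r st') (hpc : st.pc r = .x2) : st'.pc r = .remainder := by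
  unfold bwStep at h
  rw [hpc] at h
  subst h
  simp

theorem bwStep_pastTokenWrite (h : bwStep st r st') (hp : (st.pc r).PastTokenWrite)
    (hrem : st'.pc r ≠ .remainder) : (st'.pc r).PastTokenWrite ∧ st'.token r = st.token r := by
  refine ⟨?_, ?_⟩
  · unfold bwStep at h
    split at h <;> (try split_ifs at h) <;> (try obtain rfl | h := h) <;>
      (try obtain ⟨_, _, h⟩ := h) <;> (try subst h) <;>
      simp_all [BWPc.PastTokenWrite]
  · by_contra htok
    rcases bwStep_token h htok with ⟨_, hpc⟩ | ⟨_, _, _, hpc⟩ | ⟨-, hpc⟩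
    · simp [hpc, BWPc.PastTokenWrite] at hp
    · simp [hpc, BWPc.PastTokenWrite] at hp
    · exact hrem hpc

theorem bwStep_scanning (h : bwStep st r st') (hs : bwScanning st r s c) :
    bwScanning st' r s c ∨ bwPublished st' r s c := by
  rcases hs with ⟨j, m, hpc⟩ | ⟨m, hpc⟩ <;> unfold bwStep at h <;> rw [hpc] at h <;>
    dsimp only at h <;> (try split_ifs at h) <;> subst h <;>
    simp [bwScanning, bwPublished, BWPc.PastTokenWrite]

theorem bwScanning.choosing_token (hinv : bwLocalInv (st.pc r) (st.token r) (st.choosing r))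
    (hs : bwScanning st r s c) : st.choosing r = true ∧ st.token r = ⟨s, none, 0⟩ := by
  rcases hs with ⟨j, m, hpc⟩ | ⟨m, hpc⟩ <;> rw [hpc] at hinv <;> exact ⟨hinv.2.1, hinv.1⟩

end Step

/-! ### Executions -/

namespace BWExec

variable {N : ℕ} (e : BWExec N) {r : Fin N} {s : ℕ} {c : Color}

theorem step_or_frame (r : Fin N) (n : ℕ) :
    bwStep (e.state n) r (e.state (n + 1)) ∨
      ((e.state (n + 1)).pc r = (e.state n).pc r ∧
        (e.state (n + 1)).token r = (e.state n).token r ∧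
        (e.state (n + 1)).choosing r = (e.state n).choosing r) := by
  by_cases hs : e.sched n = r
  · exact Or.inl (hs ▸ e.step n)
  · exact Or.inr (bwStep_frame (e.step n) (Ne.symm hs))

theorem step_of_pc_ne {n : ℕ} (h : (e.state (n + 1)).pc r ≠ (e.state n).pc r) :
    bwStep (e.state n) r (e.state (n + 1)) :=
  (e.step_or_frame r n).resolve_right fun hf => h hf.1

theorem step_of_token_ne {n : ℕ} (h : (e.state (n + 1)).token r ≠ (e.state n).token r) :
    bwStep (e.state n) r (e.state (n + 1)) :=
  (e.step_or_frame r n).resolve_right fun hf => h hf.2.1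

theorem localInv (n : ℕ) (r : Fin N) :
    bwLocalInv ((e.state n).pc r) ((e.state n).token r) ((e.state n).choosing r) := by
  induction n with
  | zero =>
    obtain ⟨c0, h0⟩ := e.init
    simp [h0, bwInit, bwLocalInv]
  | succ n ih =>
    rcases e.step_or_frame r n with hstep | ⟨hpc, htok, hch⟩
    · exact bwStep_localInv hstep ih
    · rwa [hpc, htok, hch]

theorem exists_flip_of_gcolor_ne {a b : ℕ} (hab : a ≤ b)
    (h : (e.state b).gcolor ≠ (e.state a).gcolor) : ∃ t, a ≤ t ∧ t < b ∧ bwFlipAt e t := by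
  obtain ⟨t, hat, htb, ht, ht'⟩ :=
    Nat.exists_boundary (P := fun k => (e.state k).gcolor = (e.state a).gcolor) hab rfl h
  exact ⟨t, hat, htb, fun hflip => ht' (hflip ▸ ht)⟩

theorem active_trans {a b c : ℕ} (h₁ : bwActiveThrough e r a b)
    (h₂ : bwActiveThrough e r b c) : bwActiveThrough e r a c := fun k hak hkc =>
  (le_or_gt k b).elim (h₁ k hak) fun hbk => h₂ k hbk hkc

theorem active_mono {a b a' b' : ℕ} (h : bwActiveThrough e r a b) (ha : a ≤ a')
    (hb : b' ≤ b) : bwActiveThrough e r a' b' := fun k hak hkb => h k (by omega) (by omega)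

theorem active_of_pc_eq {P : BWPc} (hP : P ≠ .remainder) {t n : ℕ}
    (h : ∀ k, t < k → k ≤ n → (e.state k).pc r = P) : bwActiveThrough e r t n :=
  fun k htk hkn => h k htk hkn ▸ hP

theorem exists_entry {P : BWPc} (hP : P ≠ .remainder) {n : ℕ} (hn : (e.state n).pc r = P) :
    ∃ t < n, bwPcPred (e.state t) r P ((e.state t).pc r) ∧
      ∀ k, t < k → k ≤ n → (e.state k).pc r = P := by
  classical
  have h0 : (e.state 0).pc r ≠ P := by
    obtain ⟨c0, h0⟩ := e.init
    simpa [h0, bwInit] using hP.symm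
  set t := Nat.findGreatest (fun k => (e.state k).pc r ≠ P) n
  have ht : (e.state t).pc r ≠ P :=
    Nat.findGreatest_spec (P := fun k => (e.state k).pc r ≠ P) (Nat.zero_le n) h0
  have hstays : ∀ k, t < k → k ≤ n → (e.state k).pc r = P := fun k htk hkn =>
    not_not.mp (Nat.findGreatest_is_greatest htk hkn)
  have htn : t < n := lt_of_le_of_ne (Nat.findGreatest_le n) fun h => ht (h ▸ hn)
  have hnext := hstays (t + 1) t.lt_succ_self htn
  have hchange : (e.state (t + 1)).pc r ≠ (e.state t).pc r := hnext ▸ Ne.symm ht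
  exact ⟨t, htn, hnext ▸ bwStep_pcPred (e.step_of_pc_ne hchange) hchange, hstays⟩

theorem gcolor_of_line5 {t : ℕ} (h : bwLine5 e r s c t) : (e.state t).gcolor = c := by
  have hchange : (e.state (t + 1)).pc r ≠ (e.state t).pc r := by rw [h.1, h.2]; simp
  have hpred := bwStep_pcPred (e.step_of_pc_ne hchange) hchange
  rw [h.1, h.2] at hpred
  simpa [bwPcPred] using hpred

theorem not_flip_of_line5 {t : ℕ} (h : bwLine5 e r s c t) : ¬ bwFlipAt e t := fun hflip => by
  obtain ⟨_, _, hpc, -⟩ := bwStep_gcolor (e.step_of_pc_ne (by rw [h.1, h.2]; simp)) hflip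
  rw [h.1] at hpc
  cases hpc

theorem session_ne_zero_of_line5 {t : ℕ} (h : bwLine5 e r s c t) : s ≠ 0 := by
  have hinv := e.localInv t r
  rw [h.1] at hinv
  exact hinv.2.2

theorem exists_exit {n : ℕ} (hpc : (e.state n).pc r = .x2) :
    ∃ x, n ≤ x ∧ (∀ k, n ≤ k → k ≤ x → (e.state k).pc r = .x2) ∧ bwCompletesExit e r x := by
  obtain ⟨m, hnm, hsched⟩ := e.fair r n (by simp [hpc])
  let AtExit : ℕ → Prop := fun x => ∀ k, n ≤ k → k ≤ x → (e.state k).pc r = .x2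
  have hm : ¬ AtExit (m + 1) := fun h => by
    have hrem := bwStep_x2 (hsched ▸ e.step m) (h m hnm m.le_succ)
    rw [h (m + 1) (by omega) le_rfl] at hrem
    cases hrem
  obtain ⟨x, hnx, -, hx, hx'⟩ := Nat.exists_boundary (P := AtExit) (by omega)
    (fun k hk hk' => le_antisymm hk' hk ▸ hpc) hm
  have hpcx : (e.state x).pc r = .x2 := hx x hnx le_rfl
  have hnext : (e.state (x + 1)).pc r ≠ .x2 := fun h => hx' fun k hk hk' =>
    (Nat.lt_or_eq_of_le hk').elim (fun hk' => hx k hk (by omega)) fun hk' => hk' ▸ h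
  exact ⟨x, hnx, hx, hpcx, bwStep_x2 (e.step_of_pc_ne (by rw [hpcx]; exact hnext)) hpcx⟩

theorem exists_exit_of_token_ne {T : BWTok} (hT : T.color = some c) {a b : ℕ} (hab : a ≤ b)
    (ha : (e.state a).token r = T) (hb : (e.state b).token r ≠ T) :
    ∃ ρ, a ≤ ρ ∧ ρ < b ∧ bwCompletesExit e r ρ ∧ (e.state ρ).token r = T := by
  obtain ⟨ρ, haρ, hρb, hρ, hρ'⟩ :=
    Nat.exists_boundary (P := fun k => (e.state k).token r = T) hab ha hb
  have hne : (e.state (ρ + 1)).token r ≠ (e.state ρ).token r := hρ ▸ hρ'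
  have hinv := e.localInv ρ r
  rcases bwStep_token (e.step_of_token_ne hne) hne with ⟨s, hpc⟩ | ⟨s, c', m, hpc⟩ | hexit
  · rw [hpc] at hinv
    simp [← hρ, hinv.1, BWTok.init] at hT
  · rw [hpc] at hinv
    simp [← hρ, hinv.1] at hT
  · exact ⟨ρ, haρ, hρb, hexit, hρ⟩

theorem pastTokenWrite_stable {a b : ℕ} (hact : bwActiveThrough e r a b) (hab : a ≤ b)
    (ha : ((e.state a).pc r).PastTokenWrite) :
    ((e.state b).pc r).PastTokenWrite ∧ (e.state b).token r = (e.state a).token r := by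
  induction b, hab using Nat.le_induction with
  | base => exact ⟨ha, rfl⟩
  | succ b hab ih =>
    obtain ⟨hb, htok⟩ := ih (e.active_mono hact le_rfl b.le_succ)
    rcases e.step_or_frame r b with hstep | ⟨hpc, htok', -⟩
    · obtain ⟨hb', htok'⟩ := bwStep_pastTokenWrite hstep hb (hact (b + 1) (by omega) le_rfl)
      exact ⟨hb', htok'.trans htok⟩
    · exact ⟨hpc ▸ hb, htok'.trans htok⟩

theorem published_mono {a b : ℕ} (hact : bwActiveThrough e r a b) (hab : a ≤ b)
    (ha : bwPublished (e.state a) r s c) : bwPublished (e.state b) r s c := by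
  obtain ⟨hb, htok⟩ := e.pastTokenWrite_stable hact hab ha.1
  exact ⟨hb, htok ▸ ha.2⟩

theorem scanning_or_published {u w t : ℕ} (hline5 : bwLine5 e r s c u)
    (hact : bwActiveThrough e r u w) (hut : u < t) (htw : t ≤ w) :
    bwScanning (e.state t) r s c ∨ bwPublished (e.state t) r s c := by
  induction t, hut using Nat.le_induction with
  | base => exact Or.inl (Or.inl ⟨0, 0, hline5.2⟩)
  | succ t hut ih =>
    rcases e.step_or_frame r t with hstep | ⟨hpc, htok, -⟩
    · rcases ih (by omega) with hs | hp
      · exact bwStep_scanning hstep hs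
      · obtain ⟨hpc, htok⟩ := bwStep_pastTokenWrite hstep hp.1 (hact (t + 1) (by omega) htw)
        exact Or.inr ⟨hpc, htok ▸ hp.2⟩
    · unfold bwScanning bwPublished
      rw [hpc, htok]
      exact ih (by omega)

end BWExec

/-! ### Tracing an invocation back -/

/-- The guard on Choosing[k] held at `τ₁`, the color of Token[k] was read at `τ₂`, and the
busy-wait of the branch taken released at `τ₃`. -/
def bwWaitPassed {N : ℕ} (e : BWExec N) (r : Fin N) (s : ℕ) (c : Color) (m : ℕ) (k : Fin N)
    (a b : ℕ) : Prop :=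
  ∃ τ₁ τ₂ τ₃, a < τ₁ ∧ τ₁ < τ₂ ∧ τ₂ < τ₃ ∧ τ₃ < b ∧
    ((e.state τ₁).choosing k = false ∨ ((e.state τ₁).token k).session = s) ∧
    ((((e.state τ₂).token k).color = some c ∧ bwSameColorReleased (e.state τ₃) r s c m k) ∨
      (((e.state τ₂).token k).color ≠ some c ∧ bwDiffColorReleased (e.state τ₃) s c k))

def bwExitScanPassed {N : ℕ} (e : BWExec N) (c : Color) (k : Fin N) (a b : ℕ) : Prop :=
  ∃ τ, a < τ ∧ τ < b ∧
    ¬(((e.state τ).token k).session ≠ 0 ∧ ((e.state τ).token k).color = some c.opp)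

theorem bwWaitPassed.mono {N : ℕ} {e : BWExec N} {r k : Fin N} {s m : ℕ} {c : Color}
    {a b a' b' : ℕ} (h : bwWaitPassed e r s c m k a b) (ha : a' ≤ a) (hb : b ≤ b') :
    bwWaitPassed e r s c m k a' b' := by
  obtain ⟨τ₁, τ₂, τ₃, h₁, h₂, h₃, h₄, hrest⟩ := h
  exact ⟨τ₁, τ₂, τ₃, by omega, h₂, h₃, by omega, hrest⟩

structure BWEntryHistory {N : ℕ} (e : BWExec N) (r : Fin N) (s : ℕ) (c : Color) (m : ℕ)
    (t ta n : ℕ) : Prop where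
  line5 : bwLine5 e r s c t
  lt_ta : t < ta
  ta_lt : ta < n
  active : bwActiveThrough e r t n
  waitPassed : ∀ k, bwWaitPassed e r s c m k ta n
  exists_rival : m ≠ 1 → ∃ τ k, t < τ ∧ τ < ta ∧ ((e.state τ).token k).IsRival s c ∧
    ((e.state τ).token k).number + 1 = m

namespace BWExec

variable {N : ℕ} (e : BWExec N) {r : Fin N} {s : ℕ} {c : Color}

theorem exists_line5_of_scan : ∀ n j m, (e.state n).pc r = .scan s c j m →
    ∃ t < n, bwLine5 e r s c t ∧ bwActiveThrough e r t n ∧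
      (m ≠ 0 → ∃ τ k, t < τ ∧ τ < n ∧ ((e.state τ).token k).IsRival s c ∧
        ((e.state τ).token k).number = m) := by
  intro n
  induction n using Nat.strong_induction_on with
  | _ n ih =>
  intro j m hn
  obtain ⟨t₀, ht₀, hpred, hconst⟩ := e.exists_entry (by simp) hn
  have hact₀ := e.active_of_pc_eq (by simp) hconst
  rcases hpred with ⟨rfl, rfl, hd3, -⟩ | ⟨j', m', rfl, hscan, hj', hm⟩
  · exact ⟨t₀, ht₀, ⟨hd3, hconst _ t₀.lt_succ_self ht₀⟩, hact₀, fun h => absurd rfl h⟩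
  obtain ⟨t, ht, hline5, hact, hrival⟩ := ih t₀ ht₀ j' m' hscan
  refine ⟨t, ht.trans ht₀, hline5, e.active_trans hact hact₀, fun hm0 => ?_⟩
  have hold : m = m' → ∃ τ k, t < τ ∧ τ < n ∧ ((e.state τ).token k).IsRival s c ∧
      ((e.state τ).token k).number = m := by
    rintro rfl
    obtain ⟨τ, k, h₁, h₂, h₃⟩ := hrival hm0
    exact ⟨τ, k, h₁, h₂.trans ht₀, h₃⟩
  rcases hm with hm | ⟨hr, hm⟩
  · exact hold hm
  · rcases max_choice m' ((e.state t₀).token ⟨j', hj'⟩).number with h | h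
    · exact hold (hm.trans h)
    · exact ⟨t₀, ⟨j', hj'⟩, ht, ht₀, hr, (hm.trans h).symm⟩

theorem exists_w1_of_wB {m j n : ℕ} (hn : (e.state n).pc r = .wB s c m j) :
    ∃ t < n, (e.state t).pc r = .w1 s c m j ∧ bwActiveThrough e r t n ∧ ∃ h : j < N,
      (e.state t).choosing ⟨j, h⟩ = false ∨ ((e.state t).token ⟨j, h⟩).session = s := by
  obtain ⟨t, ht, ⟨hw1, hguard⟩, hconst⟩ := e.exists_entry (by simp) hn
  exact ⟨t, ht, hw1, e.active_of_pc_eq (by simp) hconst, hguard⟩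

theorem exists_d5_of_w1 {m : ℕ} : ∀ n j, (e.state n).pc r = .w1 s c m j →
    ∃ t < n, (e.state t).pc r = .d5 s c m ∧ bwActiveThrough e r t n ∧
      ∀ k : Fin N, k.val < j → bwWaitPassed e r s c m k t n := by
  intro n
  induction n using Nat.strong_induction_on with
  | _ n ih =>
  intro j hn
  obtain ⟨t₀, ht₀, hpred, hconst⟩ := e.exists_entry (by simp) hn
  have hact₀ := e.active_of_pc_eq (by simp) hconst
  rcases hpred with ⟨rfl, hd5⟩ | ⟨j', rfl, hj', hbranch⟩
  · exact ⟨t₀, ht₀, hd5, hact₀, fun k hk => absurd hk (Nat.not_lt_zero _)⟩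
  obtain ⟨t₁, ht₁, hwB, hact₁, hread⟩ : ∃ t₁ < t₀, (e.state t₁).pc r = .wB s c m j' ∧
      bwActiveThrough e r t₁ t₀ ∧
      ((((e.state t₁).token ⟨j', hj'⟩).color = some c ∧
          bwSameColorReleased (e.state t₀) r s c m ⟨j', hj'⟩) ∨
        (((e.state t₁).token ⟨j', hj'⟩).color ≠ some c ∧
          bwDiffColorReleased (e.state t₀) s c ⟨j', hj'⟩)) := by
    rcases hbranch with ⟨hpc₀, hrel⟩ | ⟨hpc₀, hrel⟩
    · obtain ⟨t₁, ht₁, ⟨hwB, _, hcol⟩, hconst₁⟩ := e.exists_entry (by simp) hpc₀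
      exact ⟨t₁, ht₁, hwB, e.active_of_pc_eq (by simp) hconst₁, Or.inl ⟨hcol, hrel⟩⟩
    · obtain ⟨t₁, ht₁, ⟨hwB, _, hcol⟩, hconst₁⟩ := e.exists_entry (by simp) hpc₀
      exact ⟨t₁, ht₁, hwB, e.active_of_pc_eq (by simp) hconst₁, Or.inr ⟨hcol, hrel⟩⟩
  obtain ⟨t₂, ht₂, hw1, hact₂, _, hguard⟩ := e.exists_w1_of_wB hwB
  obtain ⟨t, ht, hd5, hact, hpassed⟩ := ih t₂ (by omega) j' hw1
  refine ⟨t, by omega, hd5, e.active_trans hact (e.active_trans hact₂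
    (e.active_trans hact₁ hact₀)), fun k hk => ?_⟩
  rcases Nat.lt_succ_iff_lt_or_eq.mp hk with hk | hk
  · exact (hpassed k hk).mono le_rfl (by omega)
  · obtain rfl : k = ⟨j', hj'⟩ := Fin.ext hk
    exact ⟨t₂, t₁, t₀, ht, ht₂, ht₁, ht₀, hguard, hread⟩

theorem entryHistory_of_cs {m n : ℕ} (hn : (e.state n).pc r = .cs s c m) :
    ∃ t ta, BWEntryHistory e r s c m t ta n := by
  obtain ⟨t₁, ht₁, ⟨j, hj, hw1⟩, hconst₁⟩ := e.exists_entry (by simp) hn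
  obtain ⟨t₂, ht₂, hd5, hact₂, hpassed⟩ := e.exists_d5_of_w1 t₁ j hw1
  obtain ⟨t₃, ht₃, hd4, hconst₃⟩ := e.exists_entry (by simp) hd5
  obtain ⟨t₄, ht₄, ⟨j', m', -, hscan, rfl⟩, hconst₄⟩ := e.exists_entry (by simp) hd4
  obtain ⟨t, ht, hline5, hact, hrival⟩ := e.exists_line5_of_scan t₄ j' m' hscan
  refine ⟨t, t₂, ⟨hline5, by omega, by omega, ?_, fun k => ?_, fun hm => ?_⟩⟩
  · exact e.active_trans hact <| e.active_trans (e.active_of_pc_eq (by simp) hconst₄) <|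
      e.active_trans (e.active_of_pc_eq (by simp) hconst₃) <|
      e.active_trans hact₂ (e.active_of_pc_eq (by simp) hconst₁)
  · exact (hpassed k (by omega)).mono le_rfl ht₁.le
  · obtain ⟨τ, k, h₁, h₂, hk, hnum⟩ := hrival (by omega)
    exact ⟨τ, k, h₁, by omega, hk, by omega⟩

theorem exists_cs_of_x1 {m : ℕ} : ∀ n j, (e.state n).pc r = .x1 s c m j →
    m ≠ 1 ∧ ∃ t < n, (e.state t).pc r = .cs s c m ∧ bwActiveThrough e r t n ∧
      ∀ k : Fin N, k.val < j → bwExitScanPassed e c k t n := by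
  intro n
  induction n using Nat.strong_induction_on with
  | _ n ih =>
  intro j hn
  obtain ⟨t₀, ht₀, hpred, hconst⟩ := e.exists_entry (by simp) hn
  have hact₀ := e.active_of_pc_eq (by simp) hconst
  rcases hpred with ⟨rfl, hm, hcs⟩ | ⟨j', rfl, hx1, hj', hfree⟩
  · exact ⟨hm, t₀, ht₀, hcs, hact₀, fun k hk => absurd hk (Nat.not_lt_zero _)⟩
  obtain ⟨hm, t, ht, hcs, hact, hpassed⟩ := ih t₀ ht₀ j' hx1
  refine ⟨hm, t, ht.trans ht₀, hcs, e.active_trans hact hact₀, fun k hk => ?_⟩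
  rcases Nat.lt_succ_iff_lt_or_eq.mp hk with hk | hk
  · obtain ⟨τ, h₁, h₂, hfree'⟩ := hpassed k hk
    exact ⟨τ, h₁, h₂.trans ht₀, hfree'⟩
  · obtain rfl : k = ⟨j', hj'⟩ := Fin.ext hk
    exact ⟨t₀, ht, ht₀, hfree⟩

theorem exists_cs_of_xFlip {m n : ℕ} (hn : (e.state n).pc r = .xFlip s c m) :
    m ≠ 1 ∧ ∃ t < n, (e.state t).pc r = .cs s c m ∧ bwActiveThrough e r t n ∧
      ∀ k, bwExitScanPassed e c k t n := by
  obtain ⟨t₀, ht₀, ⟨j, hj, hx1⟩, hconst⟩ := e.exists_entry (by simp) hn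
  obtain ⟨hm, t, ht, hcs, hact, hpassed⟩ := e.exists_cs_of_x1 t₀ j hx1
  refine ⟨hm, t, ht.trans ht₀, hcs, e.active_trans hact (e.active_of_pc_eq (by simp) hconst),
    fun k => ?_⟩
  obtain ⟨τ, h₁, h₂, hfree⟩ := hpassed k (by omega)
  exact ⟨τ, h₁, h₂.trans ht₀, hfree⟩

theorem exists_cs_of_x2 {m n : ℕ} (hn : (e.state n).pc r = .x2)
    (htok : (e.state n).token r = ⟨s, some c, m⟩) :
    ∃ t < n, (e.state t).pc r = .cs s c m ∧ bwActiveThrough e r t n := by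
  obtain ⟨t₀, ht₀, hpred, hconst⟩ := e.exists_entry (by simp) hn
  have hact₀ := e.active_of_pc_eq (by simp) hconst
  have hpast : ((e.state t₀).pc r).PastTokenWrite := by
    rcases hpred with ⟨_, _, _, hpc⟩ | ⟨_, _, _, _, hpc⟩ | ⟨_, _, hpc⟩ <;>
      simp [hpc, BWPc.PastTokenWrite]
  have htok₀ := (e.pastTokenWrite_stable hact₀ ht₀.le hpast).2.symm.trans htok
  have hinv := e.localInv t₀ r
  rcases hpred with ⟨s', c', m', hpc⟩ | ⟨s', c', m', j, hpc⟩ | ⟨s', c', hpc⟩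
  · rw [hpc] at hinv
    obtain ⟨rfl, rfl, rfl⟩ : s' = s ∧ c' = c ∧ m' = m := by simpa [hinv.1] using htok₀
    obtain ⟨-, t, ht, hcs, hact, -⟩ := e.exists_cs_of_xFlip hpc
    exact ⟨t, ht.trans ht₀, hcs, e.active_trans hact hact₀⟩
  · rw [hpc] at hinv
    obtain ⟨rfl, rfl, rfl⟩ : s' = s ∧ c' = c ∧ m' = m := by simpa [hinv.1] using htok₀
    obtain ⟨-, t, ht, hcs, hact, -⟩ := e.exists_cs_of_x1 t₀ j hpc
    exact ⟨t, ht.trans ht₀, hcs, e.active_trans hact hact₀⟩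
  · rw [hpc] at hinv
    obtain ⟨rfl, rfl, rfl⟩ : s' = s ∧ c' = c ∧ 1 = m := by simpa [hinv.1] using htok₀
    exact ⟨t₀, ht₀, hpc, hact₀⟩

theorem session_eq_of_passed {i : Fin N} {sq mq u w a b n : ℕ} (hline5 : bwLine5 e i s c u)
    (hact : bwActiveThrough e i u w) (hwait : bwWaitPassed e r sq c.opp mq i a b)
    (hscan : bwExitScanPassed e c.opp i b n) (hua : u < a) (hnw : n ≤ w) : sq = s := by
  obtain ⟨τ₁, τ₂, τ₃, h₁, h₂, h₃, h₄, hguard, -⟩ := hwait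
  obtain ⟨τ, hτ₁, hτ₂, hfree⟩ := hscan
  rcases e.scanning_or_published hline5 hact (t := τ₁) (by omega) (by omega) with
    hscanning | hpub
  · obtain ⟨hch, htok⟩ := hscanning.choosing_token (e.localInv τ₁ i)
    rcases hguard with h | h
    · rw [hch] at h
      cases h
    · rw [htok] at h
      exact h.symm
  · obtain ⟨-, m, htok⟩ := e.published_mono (e.active_mono hact (by omega : u ≤ τ₁)
      (by omega : τ ≤ w)) (by omega) hpub
    exact absurd ⟨by simpa [htok] using e.session_ne_zero_of_line5 hline5,
      by simp [htok, Color.opp_opp_s10]⟩ hfree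

theorem exists_exit_of_waitPassed_rival {d : Fin N} {mq τ₀ a b : ℕ}
    (hrival : ((e.state τ₀).token d).IsRival s c)
    (hnum : ((e.state τ₀).token d).number + 1 = mq) (hτ₀ : τ₀ ≤ a)
    (hwait : bwWaitPassed e r s c mq d a b) :
    ∃ ρ, τ₀ ≤ ρ ∧ ρ < b ∧ bwCompletesExit e d ρ ∧
      (e.state ρ).token d = (e.state τ₀).token d := by
  obtain ⟨τ₁, τ₂, τ₃, h₁, h₂, h₃, h₄, -, hbranch⟩ := hwait
  suffices ∃ ν, τ₀ ≤ ν ∧ ν < b ∧ (e.state ν).token d ≠ (e.state τ₀).token d by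
    obtain ⟨ν, hν₀, hνb, hν⟩ := this
    obtain ⟨ρ, h₀ρ, hρν, hexit, htok⟩ := e.exists_exit_of_token_ne hrival.1 hν₀ rfl hν
    exact ⟨ρ, h₀ρ, hρν.trans hνb, hexit, htok⟩
  by_cases hT₂ : (e.state τ₂).token d = (e.state τ₀).token d
  · refine ⟨τ₃, by omega, h₄, fun hT₃ => ?_⟩
    rcases hbranch with ⟨-, hrel⟩ | ⟨hcol, -⟩
    · obtain ⟨hc, h0, hs⟩ := hrival
      rw [bwSameColorReleased, hT₃] at hrel
      rcases hrel with (h | ⟨h, -⟩) | h | h | h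
      · omega
      · omega
      · exact h hc
      · exact h0 h
      · exact hs h
    · exact hcol (hT₂ ▸ hrival.1)
  · exact ⟨τ₂, by omega, by omega, hT₂⟩

theorem not_waitPassed_of_gcolor_opp {i : Fin N} {σ m u w a b : ℕ}
    (hline5 : bwLine5 e i s c u) (hact : bwActiveThrough e i u w) (hσ : σ ≠ s) (hua : u < a)
    (hbw : b ≤ w) (hgcolor : ∀ t, a < t → t < b → (e.state t).gcolor = c.opp) :
    ¬ bwWaitPassed e r σ c.opp m i a b := by
  rintro ⟨κ₁, κ₂, κ₃, h₁, h₂, h₃, h₄, hguard, hbranch⟩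
  have hpub : bwPublished (e.state κ₁) i s c := by
    refine (e.scanning_or_published hline5 hact (by omega) (by omega)).resolve_left
      fun hscanning => ?_
    obtain ⟨hch, htok⟩ := hscanning.choosing_token (e.localInv κ₁ i)
    rcases hguard with h | h
    · rw [hch] at h
      cases h
    · rw [htok] at h
      exact hσ h.symm
  have htok_at : ∀ κ, κ₁ ≤ κ → κ < b → ∃ m', (e.state κ).token i = ⟨s, some c, m'⟩ :=
    fun κ h₁κ hκb => (e.published_mono (e.active_mono hact (by omega) (by omega)) h₁κ hpub).2
  obtain ⟨m₂, htok₂⟩ := htok_at κ₂ h₂.le (by omega)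
  obtain ⟨m₃, htok₃⟩ := htok_at κ₃ (by omega) h₄
  rcases hbranch with ⟨hcol, -⟩ | ⟨-, hrel⟩
  · rw [htok₂] at hcol
    exact Color.ne_opp c (Option.some.inj hcol)
  · rw [bwDiffColorReleased, htok₃, hgcolor κ₃ (by omega) h₄] at hrel
    rcases hrel with h | h | h | h
    · exact h rfl
    · exact Color.ne_opp c (Option.some.inj h)
    · exact e.session_ne_zero_of_line5 hline5 h
    · exact hσ h.symm

end BWExec

/-! ### Descent to an earlier double flip -/

def bwDoubleFlipAt {N : ℕ} (e : BWExec N) (g : ℕ) : Prop :=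
  ∃ r s c t x f, bwLine5 e r s c t ∧ bwActiveThrough e r t x ∧ bwCompletesExit e r x ∧
    t < f ∧ f < g ∧ g ≤ x ∧ bwFlipAt e f ∧ bwFlipAt e g

namespace BWExec

variable {N : ℕ} (e : BWExec N)

/-- The color read at `t` differs from GlobalColor at `f`, so it was already flipped in
`(t, f)`. -/
theorem doubleFlipAt_of_stale_read {r : Fin N} {s : ℕ} {c : Color} {t x f : ℕ}
    (hline5 : bwLine5 e r s c t) (hact : bwActiveThrough e r t x)
    (hexit : bwCompletesExit e r x) (htf : t ≤ f) (hfx : f ≤ x) (hflip : bwFlipAt e f)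
    (hc : (e.state f).gcolor ≠ c) : bwDoubleFlipAt e f := by
  obtain ⟨g, htg, hgf, hg⟩ :=
    e.exists_flip_of_gcolor_ne htf (by rwa [e.gcolor_of_line5 hline5])
  have htg' : t < g := lt_of_le_of_ne htg fun h => e.not_flip_of_line5 hline5 (h ▸ hg)
  exact ⟨r, s, c, t, x, g, hline5, hact, hexit, htg', hgf, hfx, hg, hflip⟩

theorem gcolor_between_of_minimal {i : Fin N} {s : ℕ} {c : Color} {u w f g : ℕ}
    (hline5 : bwLine5 e i s c u) (hact : bwActiveThrough e i u w)
    (hexit : bwCompletesExit e i w) (huf : u < f) (hfg : f < g) (hgw : g ≤ w)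
    (hflip : bwFlipAt e f) (hmin : ∀ g' < g, ¬ bwDoubleFlipAt e g') :
    (e.state f).gcolor = c ∧ ∀ t, f < t → t ≤ g → (e.state t).gcolor = c.opp := by
  have hc_f : (e.state f).gcolor = c := not_not.mp fun hne =>
    hmin f hfg (e.doubleFlipAt_of_stale_read hline5 hact hexit huf.le (by omega) hflip hne)
  refine ⟨hc_f, fun t hft htg => not_not.mp fun hne => ?_⟩
  have hf₁ : (e.state (f + 1)).gcolor = c.opp :=
    (Color.opp_eq_iff_ne.mpr (hc_f ▸ Ne.symm hflip)).symm
  obtain ⟨g', hg'₁, hg'₂, hg'⟩ :=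
    e.exists_flip_of_gcolor_ne (by omega : f + 1 ≤ t) (hf₁ ▸ hne)
  exact hmin g' (by omega)
    ⟨i, s, c, u, w, f, hline5, hact, hexit, huf, by omega, by omega, hflip, hg'⟩

theorem exists_doubleFlipAt_lt {g : ℕ} (h : bwDoubleFlipAt e g) :
    ∃ g' < g, bwDoubleFlipAt e g' := by
  by_contra! hmin
  obtain ⟨i, s, c, u, w, f, hline5, hact, hexit, huf, hfg, hgw, hflip_f, hflip_g⟩ := h
  obtain ⟨hc_f, hopp⟩ :=
    e.gcolor_between_of_minimal hline5 hact hexit huf hfg hgw hflip_f hmin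
  have hstale : ∀ {r : Fin N} {σ t x : ℕ}, bwLine5 e r σ c.opp t → bwActiveThrough e r t x →
      bwCompletesExit e r x → t ≤ f → f ≤ x → False := fun hl ha hx htf hfx =>
    hmin f hfg (e.doubleFlipAt_of_stale_read hl ha hx htf hfx hflip_f
      (hc_f ▸ Color.ne_opp c))
  obtain ⟨sq, mq, hxflip, hx2⟩ := bwStep_gcolor (e.step g) hflip_g
  rw [hopp g hfg le_rfl] at hxflip
  obtain ⟨hmq, n, hng, hcs, hactq, hscan⟩ := e.exists_cs_of_xFlip hxflip
  obtain ⟨tq, ta, hist⟩ := e.entryHistory_of_cs hcs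
  have htq_ta := hist.lt_ta
  obtain ⟨x, hgx, hx2_stays, hexitq⟩ := e.exists_exit hx2
  have hactq' : bwActiveThrough e (e.sched g) tq x := e.active_trans hist.active <|
    e.active_trans hactq (e.active_of_pc_eq (by simp) hx2_stays)
  by_cases htq : tq ≤ f
  · exact hstale hist.line5 hactq' hexitq htq (by omega)
  obtain ⟨τ₀, d, hτ₀, hτ₀a, hrival, hnum⟩ := hist.exists_rival hmq
  have hsq : sq = s := e.session_eq_of_passed hline5 hact (hist.waitPassed i) (hscan i)
    (by omega) (by omega)
  obtain ⟨ρ, hτ₀ρ, hρn, hexitd, htokρ⟩ :=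
    e.exists_exit_of_waitPassed_rival hrival hnum hτ₀a.le (hist.waitPassed d)
  have htokd : (e.state ρ).token d =
      ⟨((e.state τ₀).token d).session, some c.opp, ((e.state τ₀).token d).number⟩ := by
    rw [htokρ, ← hrival.1]
  obtain ⟨n', hn'ρ, hcsd, hactd⟩ := e.exists_cs_of_x2 hexitd.1 htokd
  obtain ⟨th, ta', histd⟩ := e.entryHistory_of_cs hcsd
  have hth_ta := histd.lt_ta
  by_cases hth : th ≤ f
  · exact hstale histd.line5 (e.active_trans histd.active hactd) hexitd hth (by omega)
  · exact e.not_waitPassed_of_gcolor_opp hline5 hact (hsq ▸ hrival.2.2) (by omega) (by omega)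
      (fun t ht₁ ht₂ => hopp t (by omega) (by omega)) (histd.waitPassed i)

theorem not_doubleFlipAt (g : ℕ) : ¬ bwDoubleFlipAt e g := by
  induction g using Nat.strong_induction_on with
  | _ g ih =>
    intro h
    obtain ⟨g', hg', h'⟩ := e.exists_doubleFlipAt_lt h
    exact ih g' hg' h'

end BWExec

theorem bw_at_most_one_flip_general {N : ℕ} (e : BWExec N) (i : Fin N) (s : ℕ) (c : Color)
    (u w : ℕ)
    (hline5 : bwLine5 e i s c u)
    (hactive : bwActiveThrough e i u w)
    (hexit : bwCompletesExit e i w)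
    (f1 f2 : ℕ) (h1 : u < f1) (h12 : f1 < f2) (h2w : f2 ≤ w)
    (hf1 : bwFlipAt e f1) (hf2 : bwFlipAt e f2) : False :=
  e.not_doubleFlipAt f2 ⟨i, s, c, u, w, f1, hline5, hactive, hexit, h1, h12, h2w, hf1, hf2⟩

/-- **Lemma 3 for the BWBGME algorithm (the key invariant).**  After process `i` performs
its line-5 read of GlobalColor (at step `u`), GlobalColor cannot be flipped more than
once before `i` completes its exit section (at step `w` of the same invocation, resetting
Token[i] to (0,⊥,0)). -/
theorem bw_at_most_one_flip {N : ℕ} (e : BWExec N) (i : Fin N) (s : ℕ) (c : Color)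
    (u w : ℕ)
    (hline5 : bwLine5 e i s c u) (huw : u < w)
    (hactive : bwActiveThrough e i u w)
    (hexit : bwCompletesExit e i w)
    (f1 f2 : ℕ) (h1 : u < f1) (h12 : f1 < f2) (h2w : f2 ≤ w)
    (hf1 : bwFlipAt e f1) (hf2 : bwFlipAt e f2) : False :=
  bw_at_most_one_flip_general e i s c u w hline5 hactive hexit f1 f2 h1 h12 h2w hf1 hf2
end
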